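/- arXiv:2411.08006 — 5 statements merged into one kernel-verified Lean document; each statement's English description precedes it below -/
import Mathlib

section
/- Let χ be a right action of PSL₂(L) on L(z) satisfying the G(L)-property, let K be a subfield of L, and R ∈ L(z). Then K is a χ-field of definition of R if and only if there exists T ∈ PSL₂(L) such that for every σ ∈ G(L/K) one has R^σ = χ(T^{-1} ∘ T^σ)(R) (existence of a χ-coboundary for R with respect to L/K). -/
/-! If `S = χ(T)(R)` lies in `K(z)`, then `S^σ = S` and the `G(L)`-property give
`χ(T^σ)(R^σ) = χ(T)(R)`, i.e. `R^σ = χ(T (T^σ)⁻¹)(R)`: the coboundary of `T⁻¹`.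
Conversely, if `R^σ = χ(T⁻¹ T^σ)(R)`, the `G(L)`-property shows that `χ(T⁻¹)(R)` is fixed
by every `σ ∈ G(L/K)`, hence lies in `K(z)`. -/

open Polynomial

noncomputable section

variable {L : Type*} [Field L]

/-- `SL₂(L)`. -/
abbrev SL2 (L : Type*) [Field L] := Matrix.SpecialLinearGroup (Fin 2) L

/-- The entrywise action of a field automorphism on `SL₂(L)`. -/
def SL2.mapAut (σ : L ≃+* L) : SL2 L →* SL2 L :=
  Matrix.SpecialLinearGroup.map (σ : L →+* L)

/-- `PSL₂(L)`, the Möbius group over the algebraically closed field `L`. -/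
abbrev PSL2 (L : Type*) [Field L] := SL2 L ⧸ Subgroup.center (SL2 L)

/-- The action `T ↦ T^σ` of a field automorphism on `PSL₂(L)`. -/
def PSL2.mapAut (σ : L ≃+* L) : PSL2 L →* PSL2 L :=
  QuotientGroup.map _ _ (SL2.mapAut σ) (by
    intro A hA
    rw [Subgroup.mem_comap]
    rw [Subgroup.mem_center_iff] at hA ⊢
    intro B
    have hB : SL2.mapAut σ (SL2.mapAut σ.symm B) = B := by
      ext i j
      simp [SL2.mapAut, Matrix.SpecialLinearGroup.map_apply_coe]
    rw [← hB, ← map_mul, ← map_mul, hA])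

/-- The coefficientwise action `R ↦ R^σ` of a field automorphism on rational maps. -/
def galR (σ : L ≃+* L) (R : RatFunc L) : RatFunc L :=
  algebraMap (Polynomial L) (RatFunc L) (R.num.map (σ : L →+* L)) /
    algebraMap (Polynomial L) (RatFunc L) (R.denom.map (σ : L →+* L))

/-- `S ∈ K(z)`: all coefficients of the normalized numerator and denominator lie in `K`. -/
def definedOver (K : Subfield L) (S : RatFunc L) : Prop :=
  (∀ n, S.num.coeff n ∈ K) ∧ (∀ n, S.denom.coeff n ∈ K)

lemma galR_eq_self_of_definedOver {K : Subfield L} {S : RatFunc L} (hS : definedOver K S)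
    {σ : RingAut L} (hσ : ∀ x ∈ K, σ x = x) : galR σ S = S := by
  have num_map : S.num.map (σ : L →+* L) = S.num := by
    ext n; rw [Polynomial.coeff_map]; exact hσ _ (hS.1 n)
  have denom_map : S.denom.map (σ : L →+* L) = S.denom := by
    ext n; rw [Polynomial.coeff_map]; exact hσ _ (hS.2 n)
  rw [galR, num_map, denom_map, RatFunc.num_div_denom]

theorem stmt3_general
    (χ : PSL2 L → RatFunc L → RatFunc L)
    (hid : ∀ R : RatFunc L, χ 1 R = R)
    (hact : ∀ (A B : PSL2 L) (R : RatFunc L), χ (A * B) R = χ B (χ A R))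
    (hGal : ∀ (σ : RingAut L) (T : PSL2 L) (R : RatFunc L),
      galR σ (χ T R) = χ (PSL2.mapAut σ T) (galR σ R))
    (K : Subfield L)
    (hfix : ∀ S : RatFunc L,
      (∀ σ : RingAut L, (∀ x ∈ K, σ x = x) → galR σ S = S) → definedOver K S)
    (R : RatFunc L) :
    (∃ S : RatFunc L, definedOver K S ∧ ∃ T : PSL2 L, S = χ T R) ↔
      (∃ T : PSL2 L, ∀ σ : RingAut L, (∀ x ∈ K, σ x = x) →
        galR σ R = χ (T⁻¹ * PSL2.mapAut σ T) R) := by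
  constructor
  · rintro ⟨S, hS, T, rfl⟩
    refine ⟨T⁻¹, fun σ hσ => ?_⟩
    have fixed : χ (PSL2.mapAut σ T) (galR σ R) = χ T R := by
      rw [← hGal, galR_eq_self_of_definedOver hS hσ]
    have untwisted := congrArg (χ (PSL2.mapAut σ T)⁻¹) fixed
    rw [← hact, ← hact, mul_inv_cancel, hid] at untwisted
    rw [untwisted, inv_inv, map_inv]
  · rintro ⟨T, hT⟩
    refine ⟨χ T⁻¹ R, hfix _ fun σ hσ => ?_, T⁻¹, rfl⟩
    rw [hGal, hT σ hσ, ← hact, map_inv, mul_assoc, mul_inv_cancel, mul_one]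

/-- Weil-type criterion: for a right action `χ` with the `G(L)`-property and a subfield
`K` of `L` (rational maps being written in normalized form, so that a rational map fixed
coefficientwise by all of `G(L/K)` lies in `K(z)`), `K` is a χ-field of definition of `R`
iff there is a χ-coboundary: some `T ∈ PSL₂(L)` with `R^σ = χ(T⁻¹ ∘ T^σ)(R)` for every
`σ ∈ G(L/K)`. -/
theorem stmt3 [IsAlgClosed L]
    (χ : PSL2 L → RatFunc L → RatFunc L)
    (hid : ∀ R : RatFunc L, χ 1 R = R)
    (hact : ∀ (A B : PSL2 L) (R : RatFunc L), χ (A * B) R = χ B (χ A R))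
    (hGal : ∀ (σ : RingAut L) (T : PSL2 L) (R : RatFunc L),
      galR σ (χ T R) = χ (PSL2.mapAut σ T) (galR σ R))
    (K : Subfield L)
    (hfix : ∀ S : RatFunc L,
      (∀ σ : RingAut L, (∀ x ∈ K, σ x = x) → galR σ S = S) → definedOver K S)
    (R : RatFunc L) :
    (∃ S : RatFunc L, definedOver K S ∧ ∃ T : PSL2 L, S = χ T R) ↔
      (∃ T : PSL2 L, ∀ σ : RingAut L, (∀ x ∈ K, σ x = x) →
        galR σ R = χ (T⁻¹ * PSL2.mapAut σ T) R) :=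
  stmt3_general χ hid hact hGal K hfix R
end
end

section
/- Let k ∈ ℤ and R ∈ L(z), and suppose the k-form ω_R = R dz^k has at least three points in its combined set of zeros and poles on P¹. If T ∈ PSL₂(L) and λ ∈ L* satisfy χ_k(T)(R) = λ·R, then T permutes the (finite) set of zeros and poles of ω_R; hence the group Aut(ω_R)^P = {T ∈ PSL₂(L) : ∃λ ∈ L*, χ_k(T)(R) = λR} is finite. -/
open Polynomial

noncomputable section

variable {L : Type*} [Field L]

/-- Composition `R ∘ T` of rational maps. -/
def rcomp (R T : RatFunc L) : RatFunc L := RatFunc.eval RatFunc.C T R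

/-- The Möbius transformation `z ↦ (az+b)/(cz+d)` attached to `A = [[a,b],[c,d]] ∈ SL₂(L)`. -/
def moebius (A : SL2 L) : RatFunc L :=
  (RatFunc.C (A.1 0 0) * RatFunc.X + RatFunc.C (A.1 0 1)) /
    (RatFunc.C (A.1 1 0) * RatFunc.X + RatFunc.C (A.1 1 1))

/-- The derivative `T' = 1/(cz+d)^2` of the Möbius transformation attached to `A ∈ SL₂(L)`. -/
def mderiv (A : SL2 L) : RatFunc L :=
  ((RatFunc.C (A.1 1 0) * RatFunc.X + RatFunc.C (A.1 1 1)) ^ 2)⁻¹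

/-- The pull-back action `χ_k(T)(R) = (R ∘ T) ⬝ (T')^k` on the `k`-form `ω_R = R dz^k`. -/
def chi (k : ℤ) (A : SL2 L) (R : RatFunc L) : RatFunc L :=
  rcomp R (moebius A) * mderiv A ^ k

open OnePoint Classical in
/-- The action of the Möbius transformation attached to `A ∈ SL₂(L)` on the projective
line `P¹(L) = L ∪ {∞}`. -/
noncomputable def mact (A : SL2 L) : OnePoint L → OnePoint L := fun p =>
  OnePoint.rec
    (if A.1 1 0 = 0 then ∞ else ((A.1 0 0 / A.1 1 0 : L) : OnePoint L))
    (fun x => if A.1 1 0 * x + A.1 1 1 = 0 then ∞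
      else (((A.1 0 0 * x + A.1 0 1) / (A.1 1 0 * x + A.1 1 1) : L) : OnePoint L)) p

open OnePoint Classical in
/-- The set of zeros and poles on `P¹` of the `k`-form `ω_R = R dz^k`: the zeros and
poles of `R` in `L`, together with `∞` when the order of `ω_R` at infinity,
`-intDegree R - 2k`, is nonzero. -/
def polesZeros (k : ℤ) (R : RatFunc L) : Set (OnePoint L) :=
  {p | ∃ x : L, p = (x : OnePoint L) ∧ (R.num.eval x = 0 ∨ R.denom.eval x = 0)} ∪
    {p | p = ∞ ∧ R.intDegree + 2 * k ≠ 0}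

-- basics
lemma detA (A : SL2 L) : A.1 0 0 * A.1 1 1 - A.1 0 1 * A.1 1 0 = 1 := by
  have := A.2
  rwa [Matrix.det_fin_two] at this

def ua (A : SL2 L) : L[X] := C (A.1 0 0) * X + C (A.1 0 1)
def va (A : SL2 L) : L[X] := C (A.1 1 0) * X + C (A.1 1 1)

lemma linear_ne_zero' {a b : L} (h : ¬ (a = 0 ∧ b = 0)) : C a * X + C b ≠ 0 := by
  intro hz
  apply h
  constructor
  · have := congrArg (fun p => Polynomial.coeff p 1) hz
    simpa using this
  · have := congrArg (fun p => Polynomial.coeff p 0) hz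
    simpa using this

lemma va_ne_zero (A : SL2 L) : va A ≠ 0 := by
  apply linear_ne_zero'
  rintro ⟨hc, hd⟩
  have := detA A
  rw [hc, hd] at this
  simp at this

lemma ua_ne_zero (A : SL2 L) : ua A ≠ 0 := by
  apply linear_ne_zero'
  rintro ⟨hc, hd⟩
  have := detA A
  rw [hc, hd] at this
  simp at this

-- generic homogenization sum lemma
lemma sum_homog {K : Type*} [Field K] (f : L[X]) (φ : L →+* K) (p q : K) (hq : q ≠ 0) :
    q ^ f.natDegree * f.eval₂ φ (p / q) =
      ∑ i ∈ Finset.range (f.natDegree + 1), φ (f.coeff i) * p ^ i * q ^ (f.natDegree - i) := by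
  rw [Polynomial.eval₂_eq_sum_range, Finset.mul_sum]
  refine Finset.sum_congr rfl fun i hi => ?_
  have hin : i ≤ f.natDegree := Nat.lt_succ_iff.mp (Finset.mem_range.mp hi)
  rw [div_pow, ← pow_sub_mul_pow q hin]
  field_simp

def QT (A : SL2 L) (f : L[X]) : L[X] :=
  ∑ i ∈ Finset.range (f.natDegree + 1), C (f.coeff i) * (ua A) ^ i * (va A) ^ (f.natDegree - i)

lemma moebius_eq (A : SL2 L) :
    moebius A = algebraMap L[X] (RatFunc L) (ua A) / algebraMap L[X] (RatFunc L) (va A) := by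
  simp [moebius, ua, va, map_add, map_mul, RatFunc.algebraMap_C, RatFunc.algebraMap_X]

lemma aVne (A : SL2 L) : algebraMap L[X] (RatFunc L) (va A) ≠ 0 :=
  RatFunc.algebraMap_ne_zero (va_ne_zero A)

lemma Q1 (A : SL2 L) (f : L[X]) :
    algebraMap L[X] (RatFunc L) (QT A f) =
      algebraMap L[X] (RatFunc L) (va A) ^ f.natDegree * Polynomial.aeval (moebius A) f := by
  rw [moebius_eq, Polynomial.aeval_def, sum_homog f _ _ _ (aVne A), QT, map_sum]
  refine Finset.sum_congr rfl fun i _ => ?_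
  simp [map_mul, map_pow, RatFunc.algebraMap_C]

lemma Q3 (A : SL2 L) (f : L[X]) {x : L} (hv : (va A).eval x ≠ 0) :
    (QT A f).eval x = (va A).eval x ^ f.natDegree * f.eval ((ua A).eval x / (va A).eval x) := by
  have h := sum_homog f (RingHom.id L) ((ua A).eval x) ((va A).eval x) hv
  have : f.eval₂ (RingHom.id L) ((ua A).eval x / (va A).eval x)
      = f.eval ((ua A).eval x / (va A).eval x) := rfl
  rw [this] at h
  rw [QT]
  simp only [Polynomial.eval_finset_sum, Polynomial.eval_mul, Polynomial.eval_pow,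
    Polynomial.eval_C, h]
  rfl

lemma rm_pow {p : L[X]} (hp : p ≠ 0) (x : L) (m : ℕ) :
    rootMultiplicity x (p ^ m) = m * rootMultiplicity x p := by
  induction m with
  | zero => simp [Polynomial.rootMultiplicity_eq_zero (by simp [Polynomial.IsRoot] : ¬ (1 : L[X]).IsRoot x)]
  | succ m ih =>
      rw [pow_succ, Polynomial.rootMultiplicity_mul (mul_ne_zero (pow_ne_zero _ hp) hp), ih]
      ring

lemma rm_linear_root {α β x : L} (hα : α ≠ 0) (hx : α * x + β = 0) :
    rootMultiplicity x (C α * X + C β) = 1 := by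
  have h : C α * X + C β = C α * (X - C x) := by
    have hβ : β = -(α * x) := by linear_combination hx
    rw [hβ]
    simp only [map_neg, map_mul, mul_sub]
    ring
  rw [h, Polynomial.rootMultiplicity_mul (by
      apply mul_ne_zero
      · simpa using hα
      · exact Polynomial.X_sub_C_ne_zero x)]
  rw [Polynomial.rootMultiplicity_C, Polynomial.rootMultiplicity_X_sub_C_self]

lemma QT_mul (A : SL2 L) {f g : L[X]} (hf : f ≠ 0) (hg : g ≠ 0) :
    QT A (f * g) = QT A f * QT A g := by
  apply RatFunc.algebraMap_injective
  rw [map_mul, Q1, Q1, Q1, Polynomial.natDegree_mul hf hg, map_mul, pow_add]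
  ring

lemma QT_C (A : SL2 L) (e : L) : QT A (C e) = C e := by
  simp [QT]

lemma QT_one (A : SL2 L) : QT A (1 : L[X]) = 1 := by
  simpa using QT_C A 1

lemma QT_pow (A : SL2 L) {f : L[X]} (hf : f ≠ 0) (m : ℕ) :
    QT A (f ^ m) = QT A f ^ m := by
  induction m with
  | zero => simpa using QT_one A
  | succ m ih => rw [pow_succ, QT_mul A (pow_ne_zero _ hf) hf, ih, pow_succ]

lemma QT_lin (A : SL2 L) (r : L) :
    QT A (X - C r) = C (A.1 0 0 - r * A.1 1 0) * X + C (A.1 0 1 - r * A.1 1 1) := by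
  have h1 : (X - C r).natDegree = 1 := Polynomial.natDegree_X_sub_C r
  simp only [QT, h1, Finset.sum_range_succ, Finset.sum_range_zero, zero_add, pow_zero, pow_one,
    Polynomial.coeff_sub, Polynomial.coeff_X_zero, Polynomial.coeff_C_zero,
    Polynomial.coeff_X_one, Polynomial.coeff_C, one_mul, ua, va]
  simp only [zero_sub, map_neg, map_sub, map_mul, map_one, map_zero, if_true, one_ne_zero, if_false]
  ring

lemma coeff_linpow_mul (α β γ δ : L) {i n : ℕ} (hin : i ≤ n) :
    ((C α * X + C β) ^ i * (C γ * X + C δ) ^ (n - i)).coeff n = α ^ i * γ ^ (n - i) := by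
  have h1 : ((C α * X + C β) ^ i).natDegree ≤ i :=
    Polynomial.natDegree_pow_le.trans (by
      calc i * (C α * X + C β).natDegree ≤ i * 1 :=
            Nat.mul_le_mul_left i (Polynomial.natDegree_linear_le)
        _ = i := Nat.mul_one i)
  have h2 : ((C γ * X + C δ) ^ (n - i)).natDegree ≤ n - i :=
    Polynomial.natDegree_pow_le.trans (by
      calc (n - i) * (C γ * X + C δ).natDegree ≤ (n - i) * 1 :=
            Nat.mul_le_mul_left _ (Polynomial.natDegree_linear_le)
        _ = n - i := Nat.mul_one _)
  have hn : n = i + (n - i) := by omega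
  have key := Polynomial.coeff_mul_add_eq_of_natDegree_le h1 h2
  rw [← hn] at key
  rw [key]
  have e1 : ((C α * X + C β) ^ i).coeff i = α ^ i := by
    have := Polynomial.coeff_pow_of_natDegree_le (p := C α * X + C β) (n := 1)
      Polynomial.natDegree_linear_le (m := i)
    rw [mul_one] at this
    rw [this]
    simp
  have e2 : ((C γ * X + C δ) ^ (n - i)).coeff (n - i) = γ ^ (n - i) := by
    have := Polynomial.coeff_pow_of_natDegree_le (p := C γ * X + C δ) (n := 1)
      Polynomial.natDegree_linear_le (m := n - i)
    rw [mul_one] at this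
    rw [this]
    simp
  rw [e1, e2]

lemma natDegree_QT_le (A : SL2 L) (f : L[X]) : (QT A f).natDegree ≤ f.natDegree := by
  apply Polynomial.natDegree_sum_le_of_forall_le
  intro i hi
  have hin : i ≤ f.natDegree := Nat.lt_succ_iff.mp (Finset.mem_range.mp hi)
  calc (C (f.coeff i) * ua A ^ i * va A ^ (f.natDegree - i)).natDegree
      ≤ (C (f.coeff i) * ua A ^ i).natDegree + (va A ^ (f.natDegree - i)).natDegree :=
        Polynomial.natDegree_mul_le
    _ ≤ ((C (f.coeff i)).natDegree + (ua A ^ i).natDegree) + (va A ^ (f.natDegree - i)).natDegree := by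
        gcongr
        exact Polynomial.natDegree_mul_le
    _ ≤ (0 + i * 1) + (f.natDegree - i) * 1 := by
        gcongr
        · simp
        · exact Polynomial.natDegree_pow_le.trans (by gcongr; exact Polynomial.natDegree_linear_le)
        · exact Polynomial.natDegree_pow_le.trans (by gcongr; exact Polynomial.natDegree_linear_le)
    _ ≤ f.natDegree := by omega

lemma coeff_QT_top (A : SL2 L) (f : L[X]) :
    (QT A f).coeff f.natDegree =
      ∑ i ∈ Finset.range (f.natDegree + 1), f.coeff i * (A.1 0 0) ^ i * (A.1 1 0) ^ (f.natDegree - i) := by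
  rw [QT, Polynomial.finset_sum_coeff]
  refine Finset.sum_congr rfl fun i hi => ?_
  have hin : i ≤ f.natDegree := Nat.lt_succ_iff.mp (Finset.mem_range.mp hi)
  rw [mul_assoc, Polynomial.coeff_C_mul, ua, va, coeff_linpow_mul _ _ _ _ hin, mul_assoc]

lemma coeff_QT_top_c_ne (A : SL2 L) (f : L[X]) (hc : A.1 1 0 ≠ 0) :
    (QT A f).coeff f.natDegree = (A.1 1 0) ^ f.natDegree * f.eval (A.1 0 0 / A.1 1 0) := by
  rw [coeff_QT_top]
  have h := sum_homog f (RingHom.id L) (A.1 0 0) (A.1 1 0) hc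
  have he : f.eval₂ (RingHom.id L) (A.1 0 0 / A.1 1 0) = f.eval (A.1 0 0 / A.1 1 0) := rfl
  rw [he] at h
  simp only [RingHom.id_apply] at h
  exact h.symm

lemma coeff_QT_top_c_eq (A : SL2 L) (f : L[X]) (hc : A.1 1 0 = 0) :
    (QT A f).coeff f.natDegree = f.coeff f.natDegree * (A.1 0 0) ^ f.natDegree := by
  rw [coeff_QT_top]
  rw [Finset.sum_eq_single f.natDegree]
  · simp
  · intro i hi hne
    have hin : i < f.natDegree := by
      have := Nat.lt_succ_iff.mp (Finset.mem_range.mp hi); omega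
    rw [hc, zero_pow (by omega), mul_zero]
  · intro h
    exact absurd (Finset.self_mem_range_succ f.natDegree) h

lemma va_eval_pole (A : SL2 L) (hc : A.1 1 0 ≠ 0) :
    (va A).eval (-(A.1 1 1 / A.1 1 0)) = 0 := by
  simp only [va, Polynomial.eval_add, Polynomial.eval_mul, Polynomial.eval_C, Polynomial.eval_X]
  field_simp
  ring

lemma ua_eval_pole (A : SL2 L) (hc : A.1 1 0 ≠ 0) :
    (ua A).eval (-(A.1 1 1 / A.1 1 0)) = -(A.1 1 0)⁻¹ := by
  have hdet := detA A
  simp only [ua, Polynomial.eval_add, Polynomial.eval_mul, Polynomial.eval_C, Polynomial.eval_X]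
  field_simp
  linear_combination -hdet

lemma eval_QT_pole (A : SL2 L) (f : L[X]) (hc : A.1 1 0 ≠ 0) :
    (QT A f).eval (-(A.1 1 1 / A.1 1 0)) =
      f.coeff f.natDegree * (-(A.1 1 0)⁻¹) ^ f.natDegree := by
  rw [QT, Polynomial.eval_finset_sum]
  rw [Finset.sum_eq_single f.natDegree]
  · simp [ua_eval_pole A hc]
  · intro i hi hne
    have hin : i < f.natDegree := by
      have := Nat.lt_succ_iff.mp (Finset.mem_range.mp hi); omega
    simp [va_eval_pole A hc, zero_pow (show f.natDegree - i ≠ 0 by omega)]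
  · intro hmem
    exact absurd (Finset.self_mem_range_succ f.natDegree) hmem

lemma QT_ne_zero (A : SL2 L) {f : L[X]} (hf : f ≠ 0) : QT A f ≠ 0 := by
  by_cases hc : A.1 1 0 = 0
  · intro h0
    have := coeff_QT_top_c_eq A f hc
    rw [h0] at this
    simp only [Polynomial.coeff_zero] at this
    have ha : A.1 0 0 ≠ 0 := by
      intro ha
      have := detA A
      rw [ha, hc] at this; simp at this
    have : f.coeff f.natDegree = 0 := by
      rcases mul_eq_zero.mp this.symm with h | h
      · exact h
      · exact absurd h (pow_ne_zero _ ha)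
    exact hf (Polynomial.leadingCoeff_eq_zero.mp this)
  · intro h0
    have := eval_QT_pole A f hc
    rw [h0] at this
    simp only [Polynomial.eval_zero] at this
    have : f.coeff f.natDegree = 0 := by
      rcases mul_eq_zero.mp this.symm with h | h
      · exact h
      · exact absurd h (pow_ne_zero _ (neg_ne_zero.mpr (inv_ne_zero hc)))
    exact hf (Polynomial.leadingCoeff_eq_zero.mp this)

lemma rm_QT_pole (A : SL2 L) (f : L[X]) (hf : f ≠ 0) (hc : A.1 1 0 ≠ 0) :
    rootMultiplicity (-(A.1 1 1 / A.1 1 0)) (QT A f) = 0 := by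
  apply Polynomial.rootMultiplicity_eq_zero
  intro h
  rw [Polynomial.IsRoot, eval_QT_pole A f hc] at h
  rcases mul_eq_zero.mp h with h | h
  · exact hf (Polynomial.leadingCoeff_eq_zero.mp h)
  · exact absurd h (pow_ne_zero _ (neg_ne_zero.mpr (inv_ne_zero hc)))

lemma natDegree_QT_add_rm (A : SL2 L) {f : L[X]} (hf : f ≠ 0) (hc : A.1 1 0 ≠ 0) :
    (QT A f).natDegree + rootMultiplicity (A.1 0 0 / A.1 1 0) f = f.natDegree := by
  set r := A.1 0 0 / A.1 1 0 with hr
  set m := rootMultiplicity r f with hm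
  set h := f /ₘ (X - C r) ^ m with hhdef
  have hkey : (X - C r) ^ m * h = f := Polynomial.pow_mul_divByMonic_rootMultiplicity_eq f r
  have hh : h.eval r ≠ 0 := Polynomial.eval_divByMonic_pow_rootMultiplicity_ne_zero r hf
  have hh0 : h ≠ 0 := fun h0 => hh (by simp [h0])
  have hQ : QT A f = C (A.1 0 1 - r * A.1 1 1) ^ m * QT A h := by
    rw [← hkey, QT_mul A (pow_ne_zero _ (Polynomial.X_sub_C_ne_zero r)) hh0,
      QT_pow A (Polynomial.X_sub_C_ne_zero r) m, QT_lin]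
    have hzero : A.1 0 0 - r * A.1 1 0 = 0 := by
      rw [hr]; field_simp; ring
    rw [hzero]
    simp only [map_zero, zero_mul, zero_add]
  have hval : A.1 0 1 - r * A.1 1 1 ≠ 0 := by
    have hdet := detA A
    rw [hr]
    intro hz
    rw [div_mul_eq_mul_div, sub_eq_zero] at hz
    rw [eq_comm, div_eq_iff hc] at hz
    apply one_ne_zero' L
    rw [← hdet]
    linear_combination hz
  have hd1 : (QT A h).natDegree = h.natDegree := by
    refine le_antisymm (natDegree_QT_le A h) ?_
    apply Polynomial.le_natDegree_of_ne_zero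
    rw [coeff_QT_top_c_ne A h hc, ← hr]
    exact mul_ne_zero (pow_ne_zero _ hc) hh
  have hd2 : f.natDegree = m + h.natDegree := by
    rw [← hkey, Polynomial.natDegree_mul (pow_ne_zero _ (Polynomial.X_sub_C_ne_zero r)) hh0,
      Polynomial.natDegree_pow, Polynomial.natDegree_X_sub_C, mul_one]
  have hCne : (C (A.1 0 1 - r * A.1 1 1) : L[X]) ≠ 0 := Polynomial.C_ne_zero.mpr hval
  have hd3 : (QT A f).natDegree = h.natDegree := by
    rw [hQ, Polynomial.natDegree_mul (pow_ne_zero _ hCne) (QT_ne_zero A hh0),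
      Polynomial.natDegree_pow, Polynomial.natDegree_C, mul_zero, zero_add, hd1]
  omega

lemma rm_QT (A : SL2 L) {f : L[X]} (hf : f ≠ 0) {x : L} (hv : (va A).eval x ≠ 0) :
    rootMultiplicity x (QT A f) =
      rootMultiplicity ((ua A).eval x / (va A).eval x) f := by
  set r := (ua A).eval x / (va A).eval x with hr
  set m := rootMultiplicity r f with hm
  set h := f /ₘ (X - C r) ^ m with hhdef
  have hkey : (X - C r) ^ m * h = f := Polynomial.pow_mul_divByMonic_rootMultiplicity_eq f r
  have hh : h.eval r ≠ 0 := Polynomial.eval_divByMonic_pow_rootMultiplicity_ne_zero r hf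
  have hh0 : h ≠ 0 := fun h0 => hh (by simp [h0])
  have hQ : QT A f = (C (A.1 0 0 - r * A.1 1 0) * X + C (A.1 0 1 - r * A.1 1 1)) ^ m * QT A h := by
    rw [← hkey, QT_mul A (pow_ne_zero _ (Polynomial.X_sub_C_ne_zero r)) hh0,
      QT_pow A (Polynomial.X_sub_C_ne_zero r) m, QT_lin]
  have hue : (ua A).eval x = A.1 0 0 * x + A.1 0 1 := by
    simp [ua]
  have hve : (va A).eval x = A.1 1 0 * x + A.1 1 1 := by
    simp [va]
  have hα : A.1 0 0 - r * A.1 1 0 ≠ 0 := by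
    intro hz
    have hdet := detA A
    rw [hr, hue, hve] at hz
    rw [div_mul_eq_mul_div, sub_eq_zero, eq_comm, div_eq_iff (by rw [← hve]; exact hv)] at hz
    apply one_ne_zero' L
    rw [← hdet]
    linear_combination -hz
  have hroot : (A.1 0 0 - r * A.1 1 0) * x + (A.1 0 1 - r * A.1 1 1) = 0 := by
    have : r * ((va A).eval x) = (ua A).eval x := by
      rw [hr, div_mul_cancel₀ _ hv]
    rw [hue, hve] at this
    linear_combination -this
  have hlin0 : C (A.1 0 0 - r * A.1 1 0) * X + C (A.1 0 1 - r * A.1 1 1) ≠ 0 :=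
    linear_ne_zero' (fun ⟨h1, _⟩ => hα h1)
  have hQTh : rootMultiplicity x (QT A h) = 0 := by
    apply Polynomial.rootMultiplicity_eq_zero
    intro hroot'
    rw [Polynomial.IsRoot, Q3 A h hv] at hroot'
    rcases mul_eq_zero.mp hroot' with h' | h'
    · exact pow_ne_zero _ hv h'
    · exact hh (by rw [← hr] at h'; exact h')
  rw [hQ, Polynomial.rootMultiplicity_mul
    (mul_ne_zero (pow_ne_zero _ hlin0) (QT_ne_zero A hh0)), rm_pow hlin0,
    rm_linear_root hα hroot, hQTh, mul_one, add_zero]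

/-! ### Orders of rational functions -/

def ordAt (x : L) (S : RatFunc L) : ℤ :=
  (rootMultiplicity x S.num : ℤ) - rootMultiplicity x S.denom

lemma cross_identity {f g : L[X]} (hg : g ≠ 0)
    {S : RatFunc L}
    (hS : S = algebraMap L[X] (RatFunc L) f / algebraMap L[X] (RatFunc L) g) :
    S.num * g = f * S.denom := by
  have h1 : algebraMap L[X] (RatFunc L) S.num / algebraMap L[X] (RatFunc L) S.denom
      = algebraMap L[X] (RatFunc L) f / algebraMap L[X] (RatFunc L) g := by
    rw [RatFunc.num_div_denom]; exact hS
  rw [div_eq_div_iff (RatFunc.algebraMap_ne_zero S.denom_ne_zero)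
    (RatFunc.algebraMap_ne_zero hg)] at h1
  apply RatFunc.algebraMap_injective
  rw [map_mul, map_mul]
  exact h1

lemma ordAt_div (x : L) {f g : L[X]} (hf : f ≠ 0) (hg : g ≠ 0) :
    ordAt x (algebraMap L[X] (RatFunc L) f / algebraMap L[X] (RatFunc L) g) =
      (rootMultiplicity x f : ℤ) - rootMultiplicity x g := by
  set S : RatFunc L := algebraMap L[X] (RatFunc L) f / algebraMap L[X] (RatFunc L) g with hS
  have hS0 : S ≠ 0 :=
    div_ne_zero (RatFunc.algebraMap_ne_zero hf) (RatFunc.algebraMap_ne_zero hg)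
  have hcross := cross_identity hg hS
  have hnum : S.num ≠ 0 := RatFunc.num_ne_zero hS0
  have h1 : rootMultiplicity x (S.num * g) = rootMultiplicity x (f * S.denom) := by rw [hcross]
  rw [Polynomial.rootMultiplicity_mul (mul_ne_zero hnum hg),
    Polynomial.rootMultiplicity_mul (mul_ne_zero hf (S.denom_ne_zero))] at h1
  simp only [ordAt]
  omega

lemma intDegree_div {f g : L[X]} (hf : f ≠ 0) (hg : g ≠ 0) :
    (algebraMap L[X] (RatFunc L) f / algebraMap L[X] (RatFunc L) g).intDegree =
      (f.natDegree : ℤ) - g.natDegree := by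
  set S : RatFunc L := algebraMap L[X] (RatFunc L) f / algebraMap L[X] (RatFunc L) g with hS
  have hS0 : S ≠ 0 :=
    div_ne_zero (RatFunc.algebraMap_ne_zero hf) (RatFunc.algebraMap_ne_zero hg)
  have hcross := cross_identity hg hS
  have hnum : S.num ≠ 0 := RatFunc.num_ne_zero hS0
  have h1 : (S.num * g).natDegree = (f * S.denom).natDegree := by rw [hcross]
  rw [Polynomial.natDegree_mul hnum hg, Polynomial.natDegree_mul hf S.denom_ne_zero] at h1
  rw [RatFunc.intDegree]
  omega

open OnePoint

/-- order of the `k`-form `S dz^k` at a point of `P¹`. -/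
def ordw (k : ℤ) (S : RatFunc L) : OnePoint L → ℤ := fun p =>
  OnePoint.rec (-(S.intDegree) - 2 * k) (fun x => ordAt x S) p

lemma ordw_coe (k : ℤ) (S : RatFunc L) (x : L) : ordw k S (x : OnePoint L) = ordAt x S := rfl

lemma ordw_infty (k : ℤ) (S : RatFunc L) : ordw k S (∞ : OnePoint L) = -(S.intDegree) - 2 * k := rfl

-- mact computation lemmas
open Classical in
lemma mact_coe_root (A : SL2 L) {x : L} (h : A.1 1 0 * x + A.1 1 1 = 0) :
    mact A (x : OnePoint L) = ∞ := by
  show (if A.1 1 0 * x + A.1 1 1 = 0 then ∞ else _) = ∞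
  rw [if_pos h]

open Classical in
lemma mact_coe_ne (A : SL2 L) {x : L} (h : A.1 1 0 * x + A.1 1 1 ≠ 0) :
    mact A (x : OnePoint L) = (((A.1 0 0 * x + A.1 0 1) / (A.1 1 0 * x + A.1 1 1) : L) : OnePoint L) := by
  show (if A.1 1 0 * x + A.1 1 1 = 0 then _ else _) = _
  rw [if_neg h]

open Classical in
lemma mact_infty_zero (A : SL2 L) (h : A.1 1 0 = 0) : mact A (∞ : OnePoint L) = ∞ := by
  show (if A.1 1 0 = 0 then ∞ else _) = ∞
  rw [if_pos h]

open Classical in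
lemma mact_infty_ne (A : SL2 L) (h : A.1 1 0 ≠ 0) :
    mact A (∞ : OnePoint L) = ((A.1 0 0 / A.1 1 0 : L) : OnePoint L) := by
  show (if A.1 1 0 = 0 then _ else _) = _
  rw [if_neg h]

lemma field_aux {K : Type*} [Field K] (V P Q : K) (hV : V ≠ 0) (hQ : Q ≠ 0)
    (k : ℤ) (nf ng m1 m2 : ℕ) (hm : (m1 : ℤ) = 2 * k + m2) :
    (P / V ^ nf) / (Q / V ^ ng) * ((V ^ 2)⁻¹) ^ k = (P * V ^ (ng + m2)) / (Q * V ^ (nf + m1)) := by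
  have hVz : ∀ n : ℕ, V ^ n = V ^ (n : ℤ) := fun n => (zpow_natCast V n).symm
  have h2 : ((V ^ 2)⁻¹ : K) = V ^ (-2 : ℤ) := by
    rw [zpow_neg]
    norm_cast
  have e1 : (P / V ^ nf) / (Q / V ^ ng) = (P * V ^ ng) / (Q * V ^ nf) := by
    rw [div_div_div_comm, div_div_eq_mul_div, div_mul_eq_mul_div, div_div]
  rw [e1, h2, ← zpow_mul, div_mul_eq_mul_div,
    div_eq_div_iff (mul_ne_zero hQ (pow_ne_zero _ hV)) (mul_ne_zero hQ (pow_ne_zero _ hV))]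
  have key : V ^ ((-2) * k) * V ^ m1 = V ^ m2 := by
    rw [hVz m1, hVz m2, ← zpow_add₀ hV]
    congr 1
    omega
  rw [pow_add, pow_add, ← key]
  ring

lemma mderiv_eq (A : SL2 L) :
    mderiv A = ((algebraMap L[X] (RatFunc L) (va A)) ^ 2)⁻¹ := by
  simp [mderiv, va, map_add, map_mul, RatFunc.algebraMap_C, RatFunc.algebraMap_X]

lemma aeval_moebius_eq (A : SL2 L) (f : L[X]) :
    Polynomial.aeval (moebius A) f =
      algebraMap L[X] (RatFunc L) (QT A f) / algebraMap L[X] (RatFunc L) (va A) ^ f.natDegree := by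
  rw [eq_div_iff (pow_ne_zero _ (aVne A)), Q1]
  ring

lemma chi_eq (k : ℤ) (A : SL2 L) (S : RatFunc L) :
    chi k A S =
      algebraMap L[X] (RatFunc L) (QT A S.num * va A ^ (S.denom.natDegree + (-(2*k)).toNat)) /
      algebraMap L[X] (RatFunc L) (QT A S.denom * va A ^ (S.num.natDegree + (2*k).toNat)) := by
  have hrc : rcomp S (moebius A) =
      Polynomial.aeval (moebius A) S.num / Polynomial.aeval (moebius A) S.denom := by
    rw [rcomp, RatFunc.eval, Polynomial.aeval_def, Polynomial.aeval_def, RatFunc.algebraMap_eq_C]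
  rw [chi, hrc, mderiv_eq, aeval_moebius_eq, aeval_moebius_eq,
    map_mul, map_mul, map_pow, map_pow]
  exact field_aux _ _ _ (aVne A) (RatFunc.algebraMap_ne_zero (QT_ne_zero A S.denom_ne_zero))
    k _ _ _ _ (by omega)

lemma natDegree_QT_c_eq (A : SL2 L) {f : L[X]} (hf : f ≠ 0) (hc : A.1 1 0 = 0) :
    (QT A f).natDegree = f.natDegree := by
  refine le_antisymm (natDegree_QT_le A f) ?_
  apply Polynomial.le_natDegree_of_ne_zero
  rw [coeff_QT_top_c_eq A f hc]
  have ha : A.1 0 0 ≠ 0 := by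
    intro h0
    have := detA A
    rw [h0, hc] at this
    simp at this
  exact mul_ne_zero (fun h => hf (Polynomial.leadingCoeff_eq_zero.mp h)) (pow_ne_zero _ ha)

lemma natDegree_va_c_ne (A : SL2 L) (hc : A.1 1 0 ≠ 0) : (va A).natDegree = 1 :=
  Polynomial.natDegree_linear hc

lemma natDegree_va_c_eq (A : SL2 L) (hc : A.1 1 0 = 0) : (va A).natDegree = 0 := by
  rw [va, hc]
  simp

lemma rm_mul_pow (x : L) {p q : L[X]} (hp : p ≠ 0) (hq : q ≠ 0) (e : ℕ) :
    rootMultiplicity x (p * q ^ e) = rootMultiplicity x p + e * rootMultiplicity x q := by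
  rw [Polynomial.rootMultiplicity_mul (mul_ne_zero hp (pow_ne_zero _ hq)), rm_pow hq]

lemma natDegree_mul_pow {p q : L[X]} (hp : p ≠ 0) (hq : q ≠ 0) (e : ℕ) :
    (p * q ^ e).natDegree = p.natDegree + e * q.natDegree := by
  rw [Polynomial.natDegree_mul hp (pow_ne_zero _ hq), Polynomial.natDegree_pow]

lemma ordw_chi (k : ℤ) (A : SL2 L) {S : RatFunc L} (hS : S ≠ 0) (p : OnePoint L) :
    ordw k (chi k A S) p = ordw k S (mact A p) := by
  have hnum : S.num ≠ 0 := RatFunc.num_ne_zero hS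
  have hden : S.denom ≠ 0 := S.denom_ne_zero
  set m1 := (2*k).toNat with hm1
  set m2 := (-(2*k)).toNat with hm2
  have hm : (m1 : ℤ) - (m2 : ℤ) = 2 * k := by omega
  set F := QT A S.num * va A ^ (S.denom.natDegree + m2) with hF
  set G := QT A S.denom * va A ^ (S.num.natDegree + m1) with hG
  have hF0 : F ≠ 0 := mul_ne_zero (QT_ne_zero A hnum) (pow_ne_zero _ (va_ne_zero A))
  have hG0 : G ≠ 0 := mul_ne_zero (QT_ne_zero A hden) (pow_ne_zero _ (va_ne_zero A))
  have hchi : chi k A S = algebraMap L[X] (RatFunc L) F / algebraMap L[X] (RatFunc L) G :=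
    chi_eq k A S
  have hint : S.intDegree = (S.num.natDegree : ℤ) - S.denom.natDegree := rfl
  induction p using OnePoint.rec with
  | infty =>
    by_cases hc : A.1 1 0 = 0
    · rw [mact_infty_zero A hc, ordw_infty, ordw_infty, hchi, intDegree_div hF0 hG0, hF, hG,
        natDegree_mul_pow (QT_ne_zero A hnum) (va_ne_zero A),
        natDegree_mul_pow (QT_ne_zero A hden) (va_ne_zero A),
        natDegree_QT_c_eq A hnum hc, natDegree_QT_c_eq A hden hc, natDegree_va_c_eq A hc,
        hint]
      push_cast
      ring
    · rw [mact_infty_ne A hc, ordw_infty, ordw_coe, hchi, intDegree_div hF0 hG0, hF, hG,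
        natDegree_mul_pow (QT_ne_zero A hnum) (va_ne_zero A),
        natDegree_mul_pow (QT_ne_zero A hden) (va_ne_zero A),
        natDegree_va_c_ne A hc]
      have e1 := natDegree_QT_add_rm A hnum hc
      have e2 := natDegree_QT_add_rm A hden hc
      simp only [ordAt]
      omega
  | coe x =>
    by_cases hvx : A.1 1 0 * x + A.1 1 1 = 0
    · have hc : A.1 1 0 ≠ 0 := by
        intro h0
        rw [h0, zero_mul, zero_add] at hvx
        exact va_ne_zero A (by rw [va, h0, hvx]; simp)
      have hx : x = -(A.1 1 1 / A.1 1 0) := by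
        field_simp
        linear_combination hvx
      rw [mact_coe_root A hvx, ordw_coe, ordw_infty, hchi, ordAt_div _ hF0 hG0, hF, hG,
        rm_mul_pow _ (QT_ne_zero A hnum) (va_ne_zero A),
        rm_mul_pow _ (QT_ne_zero A hden) (va_ne_zero A)]
      have hrmva : rootMultiplicity x (va A) = 1 := rm_linear_root hc hvx
      have h1 : rootMultiplicity x (QT A S.num) = 0 := by
        rw [hx]; exact rm_QT_pole A _ hnum hc
      have h2 : rootMultiplicity x (QT A S.denom) = 0 := by
        rw [hx]; exact rm_QT_pole A _ hden hc
      rw [hrmva, h1, h2, hint]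
      omega
    · have hv : (va A).eval x ≠ 0 := by
        simpa [va] using hvx
      have hrmva : rootMultiplicity x (va A) = 0 :=
        Polynomial.rootMultiplicity_eq_zero (fun h => hv h)
      rw [mact_coe_ne A hvx, ordw_coe, ordw_coe, hchi, ordAt_div _ hF0 hG0, hF, hG,
        rm_mul_pow _ (QT_ne_zero A hnum) (va_ne_zero A),
        rm_mul_pow _ (QT_ne_zero A hden) (va_ne_zero A),
        rm_QT A hnum hv, rm_QT A hden hv, hrmva]
      have huv : (ua A).eval x / (va A).eval x = (A.1 0 0 * x + A.1 0 1) / (A.1 1 0 * x + A.1 1 1) := by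
        simp [ua, va]
      rw [huv]; simp only [ordAt]
      omega

lemma ordw_Cmul (k : ℤ) {lam : L} (hl : lam ≠ 0) {S : RatFunc L} (hS : S ≠ 0) (p : OnePoint L) :
    ordw k (RatFunc.C lam * S) p = ordw k S p := by
  have hnum : S.num ≠ 0 := RatFunc.num_ne_zero hS
  have hCl : (C lam : L[X]) ≠ 0 := Polynomial.C_ne_zero.mpr hl
  have hrep : RatFunc.C lam * S =
      algebraMap L[X] (RatFunc L) (C lam * S.num) / algebraMap L[X] (RatFunc L) S.denom := by
    rw [map_mul, RatFunc.algebraMap_C, mul_div_assoc, RatFunc.num_div_denom]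
  induction p using OnePoint.rec with
  | infty =>
    rw [ordw_infty, ordw_infty, hrep, intDegree_div (mul_ne_zero hCl hnum) S.denom_ne_zero,
      Polynomial.natDegree_mul hCl hnum, Polynomial.natDegree_C]
    have hint : S.intDegree = (S.num.natDegree : ℤ) - S.denom.natDegree := rfl
    rw [hint]
    push_cast
    ring
  | coe x =>
    rw [ordw_coe, ordw_coe, hrep, ordAt_div _ (mul_ne_zero hCl hnum) S.denom_ne_zero,
      Polynomial.rootMultiplicity_mul (mul_ne_zero hCl hnum), Polynomial.rootMultiplicity_C]
    simp only [ordAt]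
    omega

lemma mem_polesZeros_iff (k : ℤ) {R : RatFunc L} (hR : R ≠ 0) (p : OnePoint L) :
    p ∈ polesZeros k R ↔ ordw k R p ≠ 0 := by
  have hnum : R.num ≠ 0 := RatFunc.num_ne_zero hR
  have hcop := RatFunc.isCoprime_num_denom R
  induction p using OnePoint.rec with
  | infty =>
    simp only [polesZeros, Set.mem_union, Set.mem_setOf_eq]
    constructor
    · rintro (⟨x, hx, _⟩ | ⟨-, h⟩)
      · exact absurd hx (infty_ne_coe x)
      · rw [ordw_infty]; omega
    · intro h
      rw [ordw_infty] at h
      exact Or.inr ⟨trivial, by omega⟩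
  | coe x =>
    simp only [polesZeros, Set.mem_union, Set.mem_setOf_eq]
    have hnotboth : ¬ (R.num.eval x = 0 ∧ R.denom.eval x = 0) := by
      rintro ⟨h1, h2⟩
      obtain ⟨u, v, huv⟩ := hcop
      have := congrArg (Polynomial.eval x) huv
      simp [h1, h2] at this
    constructor
    · rintro (⟨x', hx, hor⟩ | ⟨h, -⟩)
      · rw [OnePoint.coe_eq_coe] at hx
        subst hx
        rw [ordw_coe]
        simp only [ordAt]
        rcases hor with h1 | h2
        · have hpos : 0 < rootMultiplicity x R.num :=
            (Polynomial.rootMultiplicity_pos hnum).mpr h1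
          have hz : rootMultiplicity x R.denom = 0 :=
            Polynomial.rootMultiplicity_eq_zero (fun hr => hnotboth ⟨h1, hr⟩)
          omega
        · have hpos : 0 < rootMultiplicity x R.denom :=
            (Polynomial.rootMultiplicity_pos R.denom_ne_zero).mpr h2
          have hz : rootMultiplicity x R.num = 0 :=
            Polynomial.rootMultiplicity_eq_zero (fun hr => hnotboth ⟨hr, h2⟩)
          omega
      · exact absurd h (OnePoint.coe_ne_infty x)
    · intro h
      rw [ordw_coe] at h
      simp only [ordAt] at h
      left
      refine ⟨x, rfl, ?_⟩
      by_contra hcon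
      push_neg at hcon
      obtain ⟨h1, h2⟩ := hcon
      rw [Polynomial.rootMultiplicity_eq_zero (fun hr => h1 hr),
        Polynomial.rootMultiplicity_eq_zero (fun hr => h2 hr)] at h
      simp at h

lemma mact_one (p : OnePoint L) : mact (1 : SL2 L) p = p := by
  have h10 : (1 : SL2 L).1 1 0 = 0 := by simp
  have h11 : (1 : SL2 L).1 1 1 = 1 := by simp
  have h00 : (1 : SL2 L).1 0 0 = 1 := by simp
  have h01 : (1 : SL2 L).1 0 1 = 0 := by simp
  induction p using OnePoint.rec with
  | infty => exact mact_infty_zero 1 h10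
  | coe x =>
    rw [mact_coe_ne 1 (by rw [h10, h11]; simp)]
    rw [h00, h01, h10, h11]
    norm_num

lemma SL2_entry_mul (A B : SL2 L) (i j : Fin 2) :
    (A * B).1 i j = A.1 i 0 * B.1 0 j + A.1 i 1 * B.1 1 j := by
  show (A.1 * B.1) i j = _
  rw [Matrix.mul_apply, Fin.sum_univ_two]

lemma mact_mul (A B : SL2 L) (p : OnePoint L) : mact (A * B) p = mact A (mact B p) := by
  have hdA := detA A
  have hdB := detA B
  induction p using OnePoint.rec with
  | infty =>
    by_cases hc2 : B.1 1 0 = 0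
    · rw [mact_infty_zero B hc2]
      have ha2 : B.1 0 0 ≠ 0 := by
        intro h0
        rw [h0, hc2] at hdB
        simp at hdB
      by_cases hc1 : A.1 1 0 = 0
      · have h0 : (A * B).1 1 0 = 0 := by rw [SL2_entry_mul, hc1, hc2]; ring
        rw [mact_infty_zero _ h0, mact_infty_zero A hc1]
      · have h0 : (A * B).1 1 0 ≠ 0 := by
          rw [SL2_entry_mul, hc2, mul_zero, add_zero]
          exact mul_ne_zero hc1 ha2
        rw [mact_infty_ne _ h0, mact_infty_ne A hc1, OnePoint.coe_eq_coe,
          SL2_entry_mul, SL2_entry_mul, hc2]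
        simp only [mul_zero, add_zero]
        rw [mul_comm (A.1 0 0) (B.1 0 0), mul_comm (A.1 1 0) (B.1 0 0),
          mul_div_mul_left _ _ ha2]
    · rw [mact_infty_ne B hc2]
      by_cases h : A.1 1 0 * (B.1 0 0 / B.1 1 0) + A.1 1 1 = 0
      · rw [mact_coe_root A h]
        have h0 : (A * B).1 1 0 = 0 := by
          rw [SL2_entry_mul]
          field_simp at h
          linear_combination h
        rw [mact_infty_zero _ h0]
      · rw [mact_coe_ne A h]
        have h0 : (A * B).1 1 0 ≠ 0 := by
          rw [SL2_entry_mul]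
          intro h0
          apply h
          field_simp
          linear_combination h0
        rw [mact_infty_ne _ h0, OnePoint.coe_eq_coe, SL2_entry_mul, SL2_entry_mul]
        have h0' : A.1 1 0 * B.1 0 0 + A.1 1 1 * B.1 1 0 ≠ 0 := by
          rw [← SL2_entry_mul]; exact h0
        rw [div_eq_div_iff h0' h]
        field_simp
  | coe x =>
    by_cases hv2 : B.1 1 0 * x + B.1 1 1 = 0
    · rw [mact_coe_root B hv2]
      have hb2 : B.1 0 0 * x + B.1 0 1 ≠ 0 := by
        intro h0
        apply one_ne_zero' L
        rw [← hdB]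
        have e1 : B.1 0 1 = -(B.1 0 0 * x) := by linear_combination h0
        have e2 : B.1 1 1 = -(B.1 1 0 * x) := by linear_combination hv2
        rw [e1, e2]
        ring
      have hvAB : (A * B).1 1 0 * x + (A * B).1 1 1 = A.1 1 0 * (B.1 0 0 * x + B.1 0 1) := by
        rw [SL2_entry_mul, SL2_entry_mul]
        have e2 : B.1 1 1 = -(B.1 1 0 * x) := by linear_combination hv2
        rw [e2]
        ring
      have huAB : (A * B).1 0 0 * x + (A * B).1 0 1 = A.1 0 0 * (B.1 0 0 * x + B.1 0 1) := by
        rw [SL2_entry_mul, SL2_entry_mul]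
        have e2 : B.1 1 1 = -(B.1 1 0 * x) := by linear_combination hv2
        rw [e2]
        ring
      by_cases hc1 : A.1 1 0 = 0
      · have h0 : (A * B).1 1 0 * x + (A * B).1 1 1 = 0 := by rw [hvAB, hc1]; ring
        rw [mact_coe_root _ h0, mact_infty_zero A hc1]
      · have h0 : (A * B).1 1 0 * x + (A * B).1 1 1 ≠ 0 := by
          rw [hvAB]; exact mul_ne_zero hc1 hb2
        rw [mact_coe_ne _ h0, mact_infty_ne A hc1, OnePoint.coe_eq_coe, hvAB, huAB,
          mul_comm (A.1 0 0) _, mul_comm (A.1 1 0) _, mul_div_mul_left _ _ hb2]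
    · rw [mact_coe_ne B hv2]
      set y := (B.1 0 0 * x + B.1 0 1) / (B.1 1 0 * x + B.1 1 1) with hy
      have hvAB : (A * B).1 1 0 * x + (A * B).1 1 1 =
          (B.1 1 0 * x + B.1 1 1) * (A.1 1 0 * y + A.1 1 1) := by
        rw [SL2_entry_mul, SL2_entry_mul, hy]
        field_simp
        ring
      have huAB : (A * B).1 0 0 * x + (A * B).1 0 1 =
          (B.1 1 0 * x + B.1 1 1) * (A.1 0 0 * y + A.1 0 1) := by
        rw [SL2_entry_mul, SL2_entry_mul, hy]
        field_simp
        ring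
      by_cases h : A.1 1 0 * y + A.1 1 1 = 0
      · rw [mact_coe_root A h]
        have h0 : (A * B).1 1 0 * x + (A * B).1 1 1 = 0 := by rw [hvAB, h]; ring
        rw [mact_coe_root _ h0]
      · rw [mact_coe_ne A h]
        have h0 : (A * B).1 1 0 * x + (A * B).1 1 1 ≠ 0 := by
          rw [hvAB]; exact mul_ne_zero hv2 h
        rw [mact_coe_ne _ h0, OnePoint.coe_eq_coe, hvAB, huAB,
          mul_div_mul_left _ _ hv2]

lemma hfix_coe {C : SL2 L} {x : L} (h : mact C (x : OnePoint L) = (x : OnePoint L)) :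
    C.1 1 0 * x ^ 2 + (C.1 1 1 - C.1 0 0) * x - C.1 0 1 = 0 := by
  by_cases hv : C.1 1 0 * x + C.1 1 1 = 0
  · rw [mact_coe_root C hv] at h
    exact absurd h (infty_ne_coe x)
  · rw [mact_coe_ne C hv, OnePoint.coe_eq_coe, div_eq_iff hv] at h
    linear_combination -h

lemma hfix_infty {C : SL2 L} (h : mact C (∞ : OnePoint L) = ∞) : C.1 1 0 = 0 := by
  by_contra hc
  rw [mact_infty_ne C hc] at h
  exact absurd h (OnePoint.coe_ne_infty _)

lemma exists_two_coe {p q r : OnePoint L} (hpq : p ≠ q) (hpr : p ≠ r) (hqr : q ≠ r)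
    (P : OnePoint L → Prop) (hp : P p) (hq : P q) (hr : P r) :
    ∃ x y : L, x ≠ y ∧ P x ∧ P y := by
  induction p using OnePoint.rec with
  | infty =>
    induction q using OnePoint.rec with
    | infty => exact absurd rfl hpq
    | coe xq =>
      induction r using OnePoint.rec with
      | infty => exact absurd rfl hpr
      | coe xr =>
        exact ⟨xq, xr, fun h => hqr (by rw [h]), hq, hr⟩
  | coe xp =>
    induction q using OnePoint.rec with
    | infty =>
      induction r using OnePoint.rec with
      | infty => exact absurd rfl hqr
      | coe xr => exact ⟨xp, xr, fun h => hpr (by rw [h]), hp, hr⟩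
    | coe xq => exact ⟨xp, xq, fun h => hpq (by rw [h]), hp, hq⟩

/-- an element of `SL₂` fixing three distinct points of `P¹` is `±1`. -/
lemma fixed_three {C : SL2 L} {p q r : OnePoint L} (hpq : p ≠ q) (hpr : p ≠ r) (hqr : q ≠ r)
    (hp : mact C p = p) (hq : mact C q = q) (hr : mact C r = r) :
    C = 1 ∨ C.1 = -1 := by
  have hdet := detA C
  by_cases hc : C.1 1 0 = 0
  · obtain ⟨x, y, hxy, hx, hy⟩ := exists_two_coe hpq hpr hqr (fun s => mact C s = s) hp hq hr
    have ex := hfix_coe hx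
    have ey := hfix_coe hy
    rw [hc] at ex ey
    have hda : C.1 1 1 = C.1 0 0 := by
      have h1 : (C.1 1 1 - C.1 0 0) * (x - y) = 0 := by linear_combination ex - ey
      rcases mul_eq_zero.mp h1 with h | h
      · linear_combination h
      · exact absurd (sub_eq_zero.mp h) hxy
    have hb : C.1 0 1 = 0 := by linear_combination -ex + x * hda
    have ha2 : (C.1 0 0 - 1) * (C.1 0 0 + 1) = 0 := by
      rw [hda, hb, hc] at hdet
      linear_combination hdet
    rcases mul_eq_zero.mp ha2 with h | h
    · left
      have ha : C.1 0 0 = 1 := by linear_combination h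
      apply Subtype.ext
      ext i j
      fin_cases i <;> fin_cases j <;>
        simp [ha, hb, hc, hda.trans ha, Matrix.one_apply]
    · right
      have ha : C.1 0 0 = -1 := by linear_combination h
      ext i j
      fin_cases i <;> fin_cases j <;>
        simp [ha, hb, hc, hda.trans ha, Matrix.one_apply]
  · exfalso
    have key : ∀ s : OnePoint L, mact C s = s →
        ∃ x : L, s = (x : OnePoint L) ∧
          C.1 1 0 * x ^ 2 + (C.1 1 1 - C.1 0 0) * x - C.1 0 1 = 0 := by
      intro s hs
      induction s using OnePoint.rec with
      | infty =>
        rw [mact_infty_ne C hc] at hs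
        exact absurd hs (OnePoint.coe_ne_infty _)
      | coe x => exact ⟨x, rfl, hfix_coe hs⟩
    obtain ⟨x, hpx, ex⟩ := key p hp
    obtain ⟨y, hqy, ey⟩ := key q hq
    obtain ⟨z, hrz, ez⟩ := key r hr
    subst hpx; subst hqy; subst hrz
    rw [OnePoint.coe_eq_coe.ne] at hpq hpr hqr
    have h1 : C.1 1 0 * (x + y) + (C.1 1 1 - C.1 0 0) = 0 := by
      have := mul_left_cancel₀ (sub_ne_zero.mpr hpq)
        (show (x - y) * (C.1 1 0 * (x + y) + (C.1 1 1 - C.1 0 0)) = (x - y) * 0 by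
          linear_combination ex - ey)
      exact this
    have h2 : C.1 1 0 * (x + z) + (C.1 1 1 - C.1 0 0) = 0 := by
      have := mul_left_cancel₀ (sub_ne_zero.mpr hpr)
        (show (x - z) * (C.1 1 0 * (x + z) + (C.1 1 1 - C.1 0 0)) = (x - z) * 0 by
          linear_combination ex - ez)
      exact this
    apply hc
    have h3 : C.1 1 0 * (y - z) = 0 := by linear_combination h1 - h2
    rcases mul_eq_zero.mp h3 with h | h
    · exact h
    · exact absurd (sub_eq_zero.mp h) hqr

lemma polesZeros_finite (k : ℤ) {R : RatFunc L} (hR : R ≠ 0) : (polesZeros k R).Finite := by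
  have hnum : R.num ≠ 0 := RatFunc.num_ne_zero hR
  apply Set.Finite.union
  · have h1 : {p : OnePoint L | ∃ x : L, p = (x : OnePoint L) ∧
        (R.num.eval x = 0 ∨ R.denom.eval x = 0)} ⊆
        (fun x : L => (x : OnePoint L)) ''
          ({x | R.num.IsRoot x} ∪ {x | R.denom.IsRoot x}) := by
      rintro p ⟨x, rfl, hor⟩
      exact ⟨x, by simpa [Polynomial.IsRoot] using hor, rfl⟩
    exact Set.Finite.subset (Set.Finite.image _
      ((Polynomial.finite_setOf_isRoot hnum).union
        (Polynomial.finite_setOf_isRoot R.denom_ne_zero))) h1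
  · exact Set.Finite.subset (Set.finite_singleton ∞) (fun p hp => hp.1)

def negSL (A : SL2 L) : SL2 L :=
  ⟨-A.1, by
    rw [Matrix.det_neg]
    simp [A.2]⟩

/-- If the `k`-form `ω_R = R dz^k` has at least three points among its zeros and poles on
`P¹`, then every `T ∈ PSL₂(L)` with `χ_k(T)(R) = λ·R` (`λ ≠ 0`) permutes the set of
zeros and poles of `ω_R`; hence the group
`Aut(ω_R)^P = {T : ∃ λ ≠ 0, χ_k(T)(R) = λR}` is finite. -/
theorem stmt9 [IsAlgClosed L] (k : ℤ) (R : RatFunc L) (hR : R ≠ 0)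
    (hE : 3 ≤ (polesZeros k R).ncard) :
    (∀ (A : SL2 L) (lam : L), lam ≠ 0 → chi k A R = RatFunc.C lam * R →
      mact A '' polesZeros k R = polesZeros k R) ∧
    Set.Finite {A : SL2 L | ∃ lam : L, lam ≠ 0 ∧ chi k A R = RatFunc.C lam * R} := by
  have hpart1 : ∀ (A : SL2 L) (lam : L), lam ≠ 0 → chi k A R = RatFunc.C lam * R →
      mact A '' polesZeros k R = polesZeros k R := by
    intro A lam hlam hchi
    have hmem : ∀ p : OnePoint L, p ∈ polesZeros k R ↔ mact A p ∈ polesZeros k R := by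
      intro p
      rw [mem_polesZeros_iff k hR, mem_polesZeros_iff k hR]
      have h1 := ordw_chi k A hR p
      rw [hchi, ordw_Cmul k hlam hR] at h1
      rw [← h1]
    apply Set.eq_of_subset_of_subset
    · rintro _ ⟨p, hp, rfl⟩
      exact (hmem p).mp hp
    · intro q hq
      have hAq : mact A (mact A⁻¹ q) = q := by
        rw [← mact_mul, mul_inv_cancel, mact_one]
      refine ⟨mact A⁻¹ q, ?_, hAq⟩
      apply (hmem (mact A⁻¹ q)).mpr
      rw [hAq]
      exact hq
  refine ⟨hpart1, ?_⟩
  obtain ⟨t, htE, ht3⟩ := Set.exists_subset_card_eq hE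
  obtain ⟨p, q, r, hpq, hpr, hqr, rfl⟩ := Set.ncard_eq_three.mp ht3
  have hp : p ∈ polesZeros k R := htE (by simp)
  have hq : q ∈ polesZeros k R := htE (by simp)
  have hr : r ∈ polesZeros k R := htE (by simp)
  have hEfin := polesZeros_finite k hR
  set S := {A : SL2 L | ∃ lam : L, lam ≠ 0 ∧ chi k A R = RatFunc.C lam * R} with hSdef
  set φ : SL2 L → OnePoint L × OnePoint L × OnePoint L :=
    fun A => (mact A p, mact A q, mact A r) with hφ
  have hmemE : ∀ A ∈ S, ∀ s ∈ polesZeros k R, mact A s ∈ polesZeros k R := by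
    rintro A ⟨lam, hlam, hchi⟩ s hs
    rw [← hpart1 A lam hlam hchi]
    exact ⟨s, hs, rfl⟩
  have himg : (φ '' S).Finite := by
    apply Set.Finite.subset ((hEfin.prod (hEfin.prod hEfin)))
    rintro _ ⟨A, hA, rfl⟩
    exact Set.mk_mem_prod (hmemE A hA p hp)
      (Set.mk_mem_prod (hmemE A hA q hq) (hmemE A hA r hr))
  have hcover : S = ⋃ y ∈ φ '' S, S ∩ φ ⁻¹' {y} := by
    ext A
    simp only [Set.mem_iUnion, Set.mem_inter_iff, Set.mem_preimage, Set.mem_singleton_iff]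
    constructor
    · intro hA
      exact ⟨φ A, ⟨A, hA, rfl⟩, hA, rfl⟩
    · rintro ⟨y, -, hA, -⟩
      exact hA
  rw [hcover]
  apply Set.Finite.biUnion himg
  intro y hy
  by_cases hne : (S ∩ φ ⁻¹' {y}).Nonempty
  · obtain ⟨A₀, hA₀⟩ := hne
    apply Set.Finite.subset ((Set.finite_singleton (negSL A₀)).insert A₀)
    rintro A₁ ⟨hA₁S, hA₁y⟩
    have hagree : ∀ s, mact A₁ s = mact A₀ s → mact (A₀⁻¹ * A₁) s = s := by
      intro s hs
      rw [mact_mul, hs, ← mact_mul, inv_mul_cancel, mact_one]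
    have h0 : φ A₀ = y := hA₀.2
    have h1 : φ A₁ = y := hA₁y
    have heq : φ A₁ = φ A₀ := h1.trans h0.symm
    have e1 : mact A₁ p = mact A₀ p := congrArg Prod.fst heq
    have e2 : mact A₁ q = mact A₀ q := congrArg (fun z => z.2.1) heq
    have e3 : mact A₁ r = mact A₀ r := congrArg (fun z => z.2.2) heq
    rw [Set.mem_insert_iff, Set.mem_singleton_iff]
    rcases fixed_three hpq hpr hqr (hagree p e1) (hagree q e2) (hagree r e3) with h | h
    · exact Or.inl (inv_mul_eq_one.mp h).symm
    · right
      have hprod : A₁ = A₀ * (A₀⁻¹ * A₁) := by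
        rw [← mul_assoc, mul_inv_cancel, one_mul]
      apply Subtype.ext
      rw [hprod]
      show A₀.1 * (A₀⁻¹ * A₁).1 = (negSL A₀).1
      rw [h]
      show A₀.1 * (-1) = -A₀.1
      exact mul_neg_one _
  · rw [Set.not_nonempty_iff_eq_empty.mp hne]
    exact Set.finite_empty
end
end

section
/- Over ℂ, for λ, μ ∈ ℂ \ {0} and k ∈ ℤ, the maps R_λ(z) = z² + λ and R_μ(z) = z² + μ are χ_k-equivalent (i.e., R_μ = (R_λ ∘ T)·(T′)^k for some T ∈ PSL₂(ℂ)) if and only if there exists a ∈ ℂ with a^{k+2} = 1 and μ = a^k λ. -/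
open Polynomial

noncomputable section

variable {L : Type*} [Field L]

section Aux

lemma aux_rcomp_eq (lam : ℂ) (t : RatFunc ℂ) :
    rcomp (RatFunc.X ^ 2 + RatFunc.C lam) t = t ^ 2 + RatFunc.C lam := by
  have h : (RatFunc.X ^ 2 + RatFunc.C lam : RatFunc ℂ)
      = algebraMap ℂ[X] (RatFunc ℂ) (X ^ 2 + C lam) := by
    simp [RatFunc.algebraMap_C, RatFunc.algebraMap_X]
  rw [rcomp, h, RatFunc.eval_algebraMap]
  simp [Polynomial.eval₂]

lemma aux_key_iff (k : ℤ) (A : SL2 ℂ) (lam mu : ℂ) :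
    (chi k A (RatFunc.X ^ 2 + RatFunc.C lam) = RatFunc.X ^ 2 + RatFunc.C mu) ↔
    algebraMap ℂ[X] (RatFunc ℂ)
        ((C (A.1 0 0) * X + C (A.1 0 1)) ^ 2 + C lam * (C (A.1 1 0) * X + C (A.1 1 1)) ^ 2)
      = algebraMap ℂ[X] (RatFunc ℂ) (X ^ 2 + C mu) *
          algebraMap ℂ[X] (RatFunc ℂ) (C (A.1 1 0) * X + C (A.1 1 1)) ^ (2 * k + 2) := by
  set a := A.1 0 0; set b := A.1 0 1; set c := A.1 1 0; set d := A.1 1 1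
  have hdet : a * d - b * c = 1 := by
    have := A.2; rwa [Matrix.det_fin_two] at this
  have hD : (C c * X + C d : ℂ[X]) ≠ 0 := by
    intro h0
    have hc : c = 0 := by simpa using congrArg (fun p => coeff p 1) h0
    have hd : d = 0 := by simpa [hc] using congrArg (fun p => coeff p 0) h0
    rw [hc, hd] at hdet; simp at hdet
  set dd : RatFunc ℂ := algebraMap ℂ[X] (RatFunc ℂ) (C c * X + C d) with hdd
  have hdd0 : dd ≠ 0 := by
    simpa [hdd] using (RatFunc.algebraMap_ne_zero hD)
  have hddval : dd = RatFunc.C c * RatFunc.X + RatFunc.C d := by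
    simp [hdd, RatFunc.algebraMap_C, RatFunc.algebraMap_X]
  set nn : RatFunc ℂ := RatFunc.C a * RatFunc.X + RatFunc.C b with hnn
  have hmo : moebius A = nn / dd := by rw [moebius, hddval]
  have hmd : mderiv A = (dd ^ 2)⁻¹ := by rw [mderiv, hddval]
  have hconv : algebraMap ℂ[X] (RatFunc ℂ)
      ((C a * X + C b) ^ 2 + C lam * (C c * X + C d) ^ 2)
      = nn ^ 2 + RatFunc.C lam * dd ^ 2 := by
    simp only [map_add, map_mul, map_pow, RatFunc.algebraMap_C, RatFunc.algebraMap_X,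
      hnn, hddval]
  have hX : algebraMap ℂ[X] (RatFunc ℂ) (X ^ 2 + C mu)
      = RatFunc.X ^ 2 + RatFunc.C mu := by
    simp only [map_add, map_pow, RatFunc.algebraMap_C, RatFunc.algebraMap_X]
  have hchi : chi k A (RatFunc.X ^ 2 + RatFunc.C lam)
      = (nn ^ 2 + RatFunc.C lam * dd ^ 2) / dd ^ (2 * k + 2) := by
    rw [chi, aux_rcomp_eq, hmo, hmd]
    rw [inv_zpow', ← zpow_natCast dd 2, ← zpow_mul]
    rw [div_pow, div_add' _ _ _ (pow_ne_zero 2 hdd0), div_mul_eq_mul_div]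
    rw [div_eq_div_iff (pow_ne_zero 2 hdd0) (zpow_ne_zero _ hdd0)]
    rw [mul_assoc, ← zpow_natCast dd 2, ← zpow_add₀ hdd0]
    have he : ((2 : ℕ) : ℤ) * -k + (2 * k + 2) = ((2 : ℕ) : ℤ) := by push_cast; ring
    rw [he]
  rw [hchi, div_eq_iff (zpow_ne_zero _ hdd0), hconv, hX]

lemma aux_scalar_wrap (k : ℤ) (a d lam mu : ℂ) (had : a * d = 1)
    (h2 : a ^ 2 = d ^ (2 * k + 2)) (h0 : mu = lam * d ^ (-(2 * k))) :
    ∃ α : ℂ, α ^ (k + 2) = 1 ∧ mu = α ^ k * lam := by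
  have ha : a ≠ 0 := left_ne_zero_of_mul_eq_one had
  have hdinv : d = a⁻¹ := eq_inv_of_mul_eq_one_left (by rw [mul_comm]; exact had)
  have h2' : (a : ℂ) ^ ((2 : ℕ) : ℤ) = a ^ (-(2 * k + 2)) := by
    rw [zpow_natCast, h2, hdinv, inv_zpow']
  refine ⟨a ^ 2, ?_, ?_⟩
  · rw [← zpow_natCast a 2, ← zpow_mul]
    rw [show ((2 : ℕ) : ℤ) * (k + 2) = ((2 : ℕ) : ℤ) + (2 * k + 2) by push_cast; ring]
    rw [zpow_add₀ ha, h2', ← zpow_add₀ ha]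
    rw [show (-(2 * k + 2) + (2 * k + 2) : ℤ) = 0 by ring, zpow_zero]
  · rw [h0, hdinv, inv_zpow', neg_neg, ← zpow_natCast a 2, ← zpow_mul]
    rw [show ((2 : ℕ) : ℤ) * k = 2 * k by push_cast; ring, mul_comm]

lemma aux_case_pos_cne (e : ℕ) (he : 2 ≤ e) (a b c d lam mu : ℂ) (hc : c ≠ 0)
    (hdet : a * d - b * c = 1)
    (hP : ((C a * X + C b) ^ 2 + C lam * (C c * X + C d) ^ 2 : ℂ[X])
      = (X ^ 2 + C mu) * (C c * X + C d) ^ e) : False := by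
  set r : ℂ := -d / c with hrdef
  have hr : c * r + d = 0 := by
    rw [hrdef, mul_div_assoc', div_add' _ _ _ hc, div_eq_zero_iff]; left; ring
  have h := congrArg (fun p => p.eval r) hP
  simp only [eval_add, eval_mul, eval_pow, eval_C, eval_X] at h
  rw [hr] at h
  rw [zero_pow (by omega : e ≠ 0)] at h
  simp only [mul_zero, ne_eq, OfNat.ofNat_ne_zero, not_false_eq_true, zero_pow, add_zero] at h
  have hab : a * r + b = 0 := pow_eq_zero_iff (n := 2) (by norm_num) |>.mp h
  rw [hrdef] at hab
  field_simp at hab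
  apply (by norm_num : (0 : ℂ) ≠ 1)
  linear_combination hab + hdet

lemma aux_case_neg_cne (m : ℕ) (hme : 2 ≤ m) (a b c d lam mu : ℂ) (hc : c ≠ 0) (hmu : mu ≠ 0)
    (hP : (((C a * X + C b) ^ 2 + C lam * (C c * X + C d) ^ 2) * (C c * X + C d) ^ m : ℂ[X])
      = X ^ 2 + C mu) : False := by
  set r : ℂ := -d / c with hrdef
  have hr : c * r + d = 0 := by
    rw [hrdef, mul_div_assoc', div_add' _ _ _ hc, div_eq_zero_iff]; left; ring
  have h1 := congrArg (fun p => (derivative p).eval r) hP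
  simp only [derivative_mul, derivative_pow, derivative_add, derivative_C, derivative_X,
    derivative_one, eval_add, eval_mul, eval_pow, eval_C, eval_X, eval_natCast,
    mul_one, mul_zero, zero_mul, add_zero, zero_add, eval_zero] at h1
  rw [hr] at h1
  rw [zero_pow (by omega : m ≠ 0), zero_pow (by omega : m - 1 ≠ 0)] at h1
  simp only [mul_zero, zero_mul, add_zero, zero_add] at h1
  have hrz : r = 0 := by
    field_simp at h1
    simpa using h1.symm
  have h0 := congrArg (fun p => p.eval r) hP
  simp only [eval_add, eval_mul, eval_pow, eval_C, eval_X] at h0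
  rw [hr, zero_pow (by omega : m ≠ 0), mul_zero] at h0
  rw [hrz] at h0
  simp at h0
  exact hmu h0.symm

lemma aux_case_pos_c0 (k : ℤ) (e : ℕ) (he : (e : ℤ) = 2 * k + 2) (a b d lam mu : ℂ)
    (hdet : a * d = 1)
    (hP : ((C a * X + C b) ^ 2 + C lam * (C (0:ℂ) * X + C d) ^ 2 : ℂ[X])
      = (X ^ 2 + C mu) * (C (0:ℂ) * X + C d) ^ e) :
    ∃ α : ℂ, α ^ (k + 2) = 1 ∧ mu = α ^ k * lam := by
  have ha : a ≠ 0 := left_ne_zero_of_mul_eq_one hdet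
  have hd : d ≠ 0 := right_ne_zero_of_mul_eq_one hdet
  simp only [map_zero, zero_mul, zero_add] at hP
  have h0 := congrArg (fun p => p.eval 0) hP
  have h1 := congrArg (fun p => (derivative p).eval 0) hP
  have h2 := congrArg (fun p => (derivative (derivative p)).eval 0) hP
  simp [derivative_pow] at h0 h1 h2
  have hb : b = 0 := h1.resolve_right ha
  subst hb
  have hde : (d : ℂ) ^ e ≠ 0 := pow_ne_zero _ hd
  apply aux_scalar_wrap k a d lam mu hdet
  · rw [← he, zpow_natCast]
    linear_combination h2 / 2
  · rw [show (-(2 * k) : ℤ) = ((2 : ℕ) : ℤ) + -((e : ℕ) : ℤ) by rw [he]; push_cast; ring,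
      zpow_add₀ hd, zpow_natCast, zpow_neg, zpow_natCast, ← mul_assoc]
    rw [eq_comm, mul_inv_eq_iff_eq_mul₀ hde]
    linear_combination h0

lemma aux_case_neg_c0 (k : ℤ) (m : ℕ) (hme : (m : ℤ) = -(2 * k + 2)) (a b d lam mu : ℂ)
    (hdet : a * d = 1)
    (hP : (((C a * X + C b) ^ 2 + C lam * (C (0:ℂ) * X + C d) ^ 2) * (C (0:ℂ) * X + C d) ^ m : ℂ[X])
      = X ^ 2 + C mu) :
    ∃ α : ℂ, α ^ (k + 2) = 1 ∧ mu = α ^ k * lam := by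
  have ha : a ≠ 0 := left_ne_zero_of_mul_eq_one hdet
  have hd : d ≠ 0 := right_ne_zero_of_mul_eq_one hdet
  have hdm : (d : ℂ) ^ m ≠ 0 := pow_ne_zero _ hd
  simp only [map_zero, zero_mul, zero_add] at hP
  have h0 := congrArg (fun p => p.eval 0) hP
  have h1 := congrArg (fun p => (derivative p).eval 0) hP
  have h2 := congrArg (fun p => (derivative (derivative p)).eval 0) hP
  simp [derivative_pow] at h0 h1 h2
  have hb : b = 0 := (h1.resolve_right (fun h => hd h.1)).resolve_right ha
  subst hb
  apply aux_scalar_wrap k a d lam mu hdet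
  · rw [show (2 * k + 2 : ℤ) = -((m : ℕ) : ℤ) by omega, zpow_neg, zpow_natCast]
    exact eq_inv_of_mul_eq_one_left (by linear_combination h2 / 2)
  · rw [show (-(2 * k) : ℤ) = ((m : ℕ) : ℤ) + ((2 : ℕ) : ℤ) by push_cast; omega,
      zpow_add₀ hd, zpow_natCast, zpow_natCast]
    linear_combination -h0

lemma aux_case_m1 (a b c d lam mu : ℂ)
    (hP : ((C a * X + C b) ^ 2 + C lam * (C c * X + C d) ^ 2 : ℂ[X]) = X ^ 2 + C mu)
    (hdet : a * d - b * c = 1) : mu = lam := by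
  have h0 := congrArg (fun p => p.eval 0) hP
  have h1 := congrArg (fun p => (derivative p).eval 0) hP
  have h2 := congrArg (fun p => (derivative (derivative p)).eval 0) hP
  simp [derivative_pow] at h0 h1 h2
  linear_combination (-1 : ℂ) * h0 + (-(b^2+lam*d^2)/2) * h2 + ((a*b+lam*c*d)/2) * h1
    + lam*(a*d-b*c+1) * hdet

lemma aux_backward (k : ℤ) (lam mu : ℂ) (hmu : mu ≠ 0)
    (α : ℂ) (h1 : α ^ (k + 2) = 1) (h2 : mu = α ^ k * lam) :
    ∃ A : SL2 ℂ, chi k A (RatFunc.X ^ 2 + RatFunc.C lam) = RatFunc.X ^ 2 + RatFunc.C mu := by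
  have hα : α ≠ 0 := by
    intro h0
    rcases eq_or_ne k 0 with hk | hk
    · rw [hk, h0] at h1; norm_num at h1
    · rw [h0, zero_zpow k hk, zero_mul] at h2; exact hmu h2
  obtain ⟨s, hs⟩ := IsAlgClosed.exists_pow_nat_eq α (n := 2) (by norm_num)
  have hs0 : s ≠ 0 := by intro h0; rw [h0] at hs; simp at hs; exact hα hs.symm
  refine ⟨(⟨!![s, 0; 0, s⁻¹], by simp [Matrix.det_fin_two_of, mul_inv_cancel₀ hs0]⟩ : SL2 ℂ), ?_⟩
  refine (aux_key_iff k _ lam mu).mpr ?_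
  have e00 : (!![s, 0; 0, s⁻¹] : Matrix (Fin 2) (Fin 2) ℂ) 0 0 = s := by simp
  have e01 : (!![s, 0; 0, s⁻¹] : Matrix (Fin 2) (Fin 2) ℂ) 0 1 = 0 := by simp
  have e10 : (!![s, 0; 0, s⁻¹] : Matrix (Fin 2) (Fin 2) ℂ) 1 0 = 0 := by simp
  have e11 : (!![s, 0; 0, s⁻¹] : Matrix (Fin 2) (Fin 2) ℂ) 1 1 = s⁻¹ := by simp
  simp only [e00, e01, e10, e11, map_zero, zero_mul, add_zero, zero_add]
  have hone : s ^ (((2 : ℕ) : ℤ) * (k + 2)) = 1 := by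
    have h := h1
    rw [← hs, ← zpow_natCast s 2, ← zpow_mul] at h
    exact h
  have hw : (s⁻¹ : ℂ) ^ (2 * k + 2) = s ^ 2 := by
    calc (s⁻¹ : ℂ) ^ (2 * k + 2) = s ^ (-(2 * k + 2)) := by rw [inv_zpow']
      _ = s ^ (((2 : ℕ) : ℤ) * (k + 2)) * s ^ (-(2 * k + 2)) := by rw [hone, one_mul]
      _ = s ^ (((2 : ℕ) : ℤ) * (k + 2) + -(2 * k + 2)) := (zpow_add₀ hs0 _ _).symm
      _ = s ^ ((2 : ℕ) : ℤ) := by congr 1; push_cast; ring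
      _ = s ^ 2 := zpow_natCast s 2
  have hmu' : mu = lam * s ^ (2 * k : ℤ) := by
    rw [h2, ← hs, ← zpow_natCast s 2, ← zpow_mul,
      show ((2 : ℕ) : ℤ) * k = 2 * k by push_cast; ring, mul_comm]
  have hx : s ^ (2 * k + 2 : ℤ) = s ^ (-2 : ℤ) := by
    calc s ^ (2 * k + 2 : ℤ) = s ^ (((2 : ℕ) : ℤ) * (k + 2) + (-2 : ℤ)) := by
          congr 1; push_cast; ring
      _ = s ^ (((2 : ℕ) : ℤ) * (k + 2)) * s ^ (-2 : ℤ) := zpow_add₀ hs0 _ _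
      _ = s ^ (-2 : ℤ) := by rw [hone, one_mul]
  have hlm : lam * (s⁻¹) ^ 2 = mu * s ^ 2 := by
    calc lam * (s⁻¹) ^ 2 = lam * s ^ (-2 : ℤ) := by
          rw [inv_pow, ← zpow_natCast s 2, ← zpow_neg]; norm_num
      _ = lam * s ^ (2 * k + 2 : ℤ) := by rw [hx]
      _ = (lam * s ^ (2 * k : ℤ)) * s ^ (2 : ℤ) := by
          rw [mul_assoc, ← zpow_add₀ hs0]
      _ = mu * s ^ 2 := by rw [← hmu', ← zpow_natCast s 2]; norm_num
  rw [RatFunc.algebraMap_C (s⁻¹), ← map_zpow₀ (RatFunc.C : ℂ →+* RatFunc ℂ), hw,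
    ← RatFunc.algebraMap_C (s ^ 2), ← map_mul]
  refine congrArg _ ?_
  have hC : (C (lam * (s⁻¹) ^ 2) : ℂ[X]) = C (mu * s ^ 2) := congrArg C hlm
  rw [show ((C s * X) ^ 2 + C lam * (C (s⁻¹)) ^ 2 : ℂ[X])
      = C s ^ 2 * X ^ 2 + C (lam * (s⁻¹) ^ 2) by rw [map_mul, map_pow]; ring]
  rw [show ((X ^ 2 + C mu) * C (s ^ 2) : ℂ[X])
      = C s ^ 2 * X ^ 2 + C (mu * s ^ 2) by rw [map_mul, map_pow]; ring]
  rw [hC]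

end Aux

/-- For nonzero `λ, μ ∈ ℂ` and `k ∈ ℤ`, the maps `R_λ(z) = z² + λ` and `R_μ(z) = z² + μ`
are `χ_k`-equivalent iff there is `a ∈ ℂ` with `a^{k+2} = 1` and `μ = a^k λ`. -/
theorem stmt12 (k : ℤ) (lam mu : ℂ) (hl : lam ≠ 0) (hm : mu ≠ 0) :
    (∃ A : SL2 ℂ, chi k A (RatFunc.X ^ 2 + RatFunc.C lam) =
        RatFunc.X ^ 2 + RatFunc.C mu) ↔
    (∃ a : ℂ, a ^ (k + 2) = 1 ∧ mu = a ^ k * lam) := by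
  constructor
  · rintro ⟨A, hA⟩
    rw [aux_key_iff] at hA
    set a := A.1 0 0 with hadef; set b := A.1 0 1 with hbdef
    set c := A.1 1 0 with hcdef; set d := A.1 1 1 with hddef
    have hdet : a * d - b * c = 1 := by
      have := A.2; rwa [Matrix.det_fin_two] at this
    have hD : (C c * X + C d : ℂ[X]) ≠ 0 := by
      intro h0
      have hc : c = 0 := by simpa using congrArg (fun p => coeff p 1) h0
      have hd : d = 0 := by simpa [hc] using congrArg (fun p => coeff p 0) h0
      rw [hc, hd] at hdet; simp at hdet
    have hdd0 : algebraMap ℂ[X] (RatFunc ℂ) (C c * X + C d) ≠ 0 :=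
      RatFunc.algebraMap_ne_zero hD
    rcases lt_trichotomy k (-1) with hk | hk | hk
    · -- k ≤ -2
      set m : ℕ := (-(2 * k + 2)).toNat with hmdef
      have hme : (m : ℤ) = -(2 * k + 2) := Int.toNat_of_nonneg (by omega)
      rw [show (2 * k + 2 : ℤ) = -((m : ℕ) : ℤ) by omega, zpow_neg, zpow_natCast] at hA
      have hA' : algebraMap ℂ[X] (RatFunc ℂ)
          (((C a * X + C b) ^ 2 + C lam * (C c * X + C d) ^ 2) * (C c * X + C d) ^ m)
          = algebraMap ℂ[X] (RatFunc ℂ) (X ^ 2 + C mu) := by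
        rw [map_mul, map_pow, hA, inv_mul_cancel_right₀ (pow_ne_zero _ hdd0)]
      have hP := RatFunc.algebraMap_injective ℂ hA'
      by_cases hc : c = 0
      · rw [hc] at hP hdet
        exact aux_case_neg_c0 k m hme a b d lam mu (by linear_combination hdet) hP
      · exact (aux_case_neg_cne m (by omega) a b c d lam mu hc hm hP).elim
    · -- k = -1
      subst hk
      rw [show (2 * (-1 : ℤ) + 2) = 0 by ring, zpow_zero, mul_one] at hA
      have hP := RatFunc.algebraMap_injective ℂ hA
      refine ⟨1, by norm_num, ?_⟩
      rw [one_zpow, one_mul]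
      exact aux_case_m1 a b c d lam mu hP hdet
    · -- k ≥ 0
      set e : ℕ := (2 * k + 2).toNat with hedef
      have he : (e : ℤ) = 2 * k + 2 := Int.toNat_of_nonneg (by omega)
      rw [show (2 * k + 2 : ℤ) = ((e : ℕ) : ℤ) by omega, zpow_natCast, ← map_pow,
        ← map_mul] at hA
      have hP := RatFunc.algebraMap_injective ℂ hA
      by_cases hc : c = 0
      · rw [hc] at hP hdet
        exact aux_case_pos_c0 k e he a b d lam mu (by linear_combination hdet) hP
      · exact (aux_case_pos_cne e (by omega) a b c d lam mu hc hdet hP).elim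
  · rintro ⟨α, h1, h2⟩
    exact aux_backward k lam mu hm α h1 h2
end
end

section
/- Let R ∈ ℂ(z), k ∈ ℤ, and suppose S = χ_k(T^{-1})(R) ∈ ℝ(z) for some T ∈ PSL₂(ℂ) (i.e., R is χ_k-definable over ℝ). Then the reflection U = T^{-1} ∘ J ∘ T (where J(z) = z̄) is an anti-holomorphic automorphism of ω_R = R dz^k, i.e., U*ω_R = ω_R. -/
open Polynomial

noncomputable section

variable {L : Type*} [Field L]

/-- Complex conjugation as a field automorphism of `ℂ`. -/
def conjAut : ℂ ≃+* ℂ := Complex.conjAe.toRingEquiv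

/-- `ℝ` viewed as a subfield of `ℂ`. -/
def realSF : Subfield ℂ := Complex.ofRealHom.fieldRange

-- ===== auxiliary lemmas =====

lemma lin_ne_zero {c d : ℂ} (h : ¬(c = 0 ∧ d = 0)) :
    RatFunc.C c * RatFunc.X + RatFunc.C d ≠ 0 := by
  rw [← RatFunc.algebraMap_C c, ← RatFunc.algebraMap_C d, ← RatFunc.algebraMap_X, ← map_mul,
    ← map_add]
  rw [Ne, map_eq_zero_iff _ (RatFunc.algebraMap_injective ℂ)]
  intro hp
  exact h ⟨by simpa using congrArg (fun p => Polynomial.coeff p 1) hp,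
    by simpa using congrArg (fun p => Polynomial.coeff p 0) hp⟩

lemma bot_ne_zero (A : SL2 ℂ) : RatFunc.C (A.1 1 0) * RatFunc.X + RatFunc.C (A.1 1 1) ≠ 0 := by
  apply lin_ne_zero
  rintro ⟨h0, h1⟩
  have := A.2
  rw [Matrix.det_fin_two, h0, h1] at this
  simp at this

lemma moebius_ne_C (A : SL2 ℂ) (r : ℂ) : moebius A ≠ RatFunc.C r := by
  intro hmc
  rw [moebius, div_eq_iff (bot_ne_zero A)] at hmc
  rw [← RatFunc.algebraMap_C (A.1 0 0), ← RatFunc.algebraMap_C (A.1 0 1),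
    ← RatFunc.algebraMap_C (A.1 1 0), ← RatFunc.algebraMap_C (A.1 1 1),
    ← RatFunc.algebraMap_C r, ← RatFunc.algebraMap_X, ← map_mul, ← map_add, ← map_mul, ← map_add,
    ← map_mul] at hmc
  have hp := IsFractionRing.injective (Polynomial ℂ) (RatFunc ℂ) hmc
  have h0 : A.1 0 0 = r * A.1 1 0 := by
    simpa using congrArg (fun p => Polynomial.coeff p 1) hp
  have h1 : A.1 0 1 = r * A.1 1 1 := by
    simpa using congrArg (fun p => Polynomial.coeff p 0) hp
  have := A.2
  rw [Matrix.det_fin_two, h0, h1] at this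
  ring_nf at this
  simp at this

lemma eval₂_moebius_ne_zero (A : SL2 ℂ) {p : Polynomial ℂ} (hp : p ≠ 0) :
    p.eval₂ RatFunc.C (moebius A) ≠ 0 := by
  have hsp : p = Polynomial.C p.leadingCoeff *
      (p.roots.map fun a => Polynomial.X - Polynomial.C a).prod :=
    (IsAlgClosed.splits p).eq_prod_roots
  intro h0
  rw [← RatFunc.algebraMap_eq_C] at h0
  have : Polynomial.aeval (moebius A) p = 0 := by rwa [Polynomial.aeval_def]
  rw [hsp] at this
  simp only [map_mul, Polynomial.aeval_C, map_multiset_prod, Multiset.map_map] at this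
  rcases mul_eq_zero.1 this with h | h
  · exact hp (by simpa [RatFunc.algebraMap_eq_C, Polynomial.leadingCoeff_eq_zero,
      _root_.map_eq_zero] using h)
  · have hmem := Multiset.prod_eq_zero_iff.1 h
    rw [Multiset.mem_map] at hmem
    obtain ⟨r, _, hr⟩ := hmem
    simp only [Function.comp, map_sub, Polynomial.aeval_X, Polynomial.aeval_C] at hr
    rw [sub_eq_zero, RatFunc.algebraMap_eq_C] at hr
    exact moebius_ne_C A r hr

/-- Composition with the Möbius transformation of `A`, as a ring homomorphism. -/
def EA (A : SL2 ℂ) : RatFunc ℂ →+* RatFunc ℂ :=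
  RatFunc.liftRingHom (Polynomial.eval₂RingHom RatFunc.C (moebius A)) (by
    intro p hp
    rw [mem_nonZeroDivisors_iff_ne_zero] at hp
    rw [Submonoid.mem_comap, mem_nonZeroDivisors_iff_ne_zero]
    exact eval₂_moebius_ne_zero A hp)

lemma rcomp_eq (A : SL2 ℂ) (R : RatFunc ℂ) : rcomp R (moebius A) = EA A R := by
  rw [rcomp, EA, RatFunc.liftRingHom_apply, RatFunc.eval]
  rfl

lemma EA_algebraMap (A : SL2 ℂ) (p : Polynomial ℂ) :
    EA A (algebraMap (Polynomial ℂ) (RatFunc ℂ) p) = p.eval₂ RatFunc.C (moebius A) := by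
  have := RatFunc.liftRingHom_apply_div (Polynomial.eval₂RingHom RatFunc.C (moebius A))
    (by intro p hp
        rw [mem_nonZeroDivisors_iff_ne_zero] at hp
        rw [Submonoid.mem_comap, mem_nonZeroDivisors_iff_ne_zero]
        exact eval₂_moebius_ne_zero A hp) p 1
  simpa [EA] using this

lemma EA_C (A : SL2 ℂ) (c : ℂ) : EA A (RatFunc.C c) = RatFunc.C c := by
  conv_lhs => rw [← RatFunc.algebraMap_C c]
  rw [EA_algebraMap, Polynomial.eval₂_C]

lemma EA_X (A : SL2 ℂ) : EA A RatFunc.X = moebius A := by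
  rw [← RatFunc.algebraMap_X, EA_algebraMap, Polynomial.eval₂_X]

lemma ratfunc_hom_ext {f g : RatFunc ℂ →+* RatFunc ℂ}
    (hC : ∀ c, f (RatFunc.C c) = g (RatFunc.C c)) (hX : f RatFunc.X = g RatFunc.X) : f = g := by
  apply IsLocalization.ringHom_ext (nonZeroDivisors (Polynomial ℂ))
  apply Polynomial.ringHom_ext
  · intro a
    simpa [RatFunc.algebraMap_C] using hC a
  · simpa [RatFunc.algebraMap_X] using hX

lemma row_mul (A B : SL2 ℂ) (i : Fin 2) :
    RatFunc.C ((A*B).1 i 0) * RatFunc.X + RatFunc.C ((A*B).1 i 1)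
      = RatFunc.C (A.1 i 0) * (RatFunc.C (B.1 0 0) * RatFunc.X + RatFunc.C (B.1 0 1))
      + RatFunc.C (A.1 i 1) * (RatFunc.C (B.1 1 0) * RatFunc.X + RatFunc.C (B.1 1 1)) := by
  have : (A*B).1 = A.1 * B.1 := rfl
  simp only [this, Matrix.mul_apply, Fin.sum_univ_two, map_add, map_mul]
  ring

lemma EA_moebius (A B : SL2 ℂ) : EA B (moebius A) = moebius (A * B) := by
  have hD := bot_ne_zero B
  have hQ : RatFunc.C (A.1 1 0) * (RatFunc.C (B.1 0 0) * RatFunc.X + RatFunc.C (B.1 0 1))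
      + RatFunc.C (A.1 1 1) * (RatFunc.C (B.1 1 0) * RatFunc.X + RatFunc.C (B.1 1 1)) ≠ 0 := by
    rw [← row_mul]; exact bot_ne_zero (A * B)
  have hinner : RatFunc.C (A.1 1 0) * moebius B + RatFunc.C (A.1 1 1) ≠ 0 := by
    rw [moebius]
    intro h
    apply hQ
    have hD' : RatFunc.X * RatFunc.C (B.1 1 0) + RatFunc.C (B.1 1 1) ≠ 0 := by rw [mul_comm]; exact hD
    field_simp at h
    linear_combination h
  rw [moebius, map_div₀, map_add, map_add, map_mul, map_mul, EA_C, EA_C, EA_C, EA_C, EA_X]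
  rw [show moebius (A*B) = _ / _ from by rw [moebius, row_mul A B 0, row_mul A B 1]]
  rw [div_eq_div_iff hinner hQ]
  rw [moebius]
  have hD' : RatFunc.X * RatFunc.C (B.1 1 0) + RatFunc.C (B.1 1 1) ≠ 0 := by rw [mul_comm]; exact hD
  field_simp

lemma EA_mderiv (A B : SL2 ℂ) : EA B (mderiv A) * mderiv B = mderiv (A * B) := by
  have hD := bot_ne_zero B
  have hQ : RatFunc.C (A.1 1 0) * (RatFunc.C (B.1 0 0) * RatFunc.X + RatFunc.C (B.1 0 1))
      + RatFunc.C (A.1 1 1) * (RatFunc.C (B.1 1 0) * RatFunc.X + RatFunc.C (B.1 1 1)) ≠ 0 := by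
    rw [← row_mul]; exact bot_ne_zero (A * B)
  rw [mderiv, map_inv₀, map_pow, map_add, map_mul, EA_C, EA_C, EA_X]
  rw [show mderiv (A*B) = _ from by rw [mderiv, row_mul A B 1]]
  rw [mderiv, moebius]
  have hD' : RatFunc.X * RatFunc.C (B.1 1 0) + RatFunc.C (B.1 1 1) ≠ 0 := by rw [mul_comm]; exact hD
  field_simp

lemma EA_comp (A B : SL2 ℂ) : (EA B).comp (EA A) = EA (A * B) :=
  ratfunc_hom_ext (fun c => by simp [EA_C]) (by simp [EA_X, EA_moebius])

lemma chi_mul (k : ℤ) (A B : SL2 ℂ) (R : RatFunc ℂ) :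
    chi k B (chi k A R) = chi k (A * B) R := by
  rw [chi, chi, chi, rcomp_eq, rcomp_eq, rcomp_eq, map_mul, map_zpow₀,
    ← RingHom.comp_apply, EA_comp, mul_assoc, ← mul_zpow, EA_mderiv]

lemma moebius_one : moebius (1 : SL2 ℂ) = RatFunc.X := by
  rw [moebius]
  simp [Matrix.SpecialLinearGroup.coe_one, Matrix.one_apply]

lemma EA_one : EA (1 : SL2 ℂ) = RingHom.id (RatFunc ℂ) :=
  ratfunc_hom_ext (fun c => by simp [EA_C]) (by simp [EA_X, moebius_one])

lemma chi_one (k : ℤ) (R : RatFunc ℂ) : chi k 1 R = R := by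
  rw [chi, rcomp_eq, EA_one, mderiv]
  simp [Matrix.SpecialLinearGroup.coe_one, Matrix.one_apply]

/-- Coefficientwise complex conjugation as a ring homomorphism of `RatFunc ℂ`. -/
def HH : RatFunc ℂ →+* RatFunc ℂ :=
  RatFunc.mapRingHom (Polynomial.mapRingHom (conjAut : ℂ →+* ℂ)) (by
    intro p hp
    rw [mem_nonZeroDivisors_iff_ne_zero] at hp
    rw [Submonoid.mem_comap, mem_nonZeroDivisors_iff_ne_zero]
    simpa [Polynomial.coe_mapRingHom, Ne, Polynomial.map_eq_zero] using hp)

lemma HH_div (p q : Polynomial ℂ) :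
    HH (algebraMap _ _ p / algebraMap _ _ q)
      = algebraMap (Polynomial ℂ) (RatFunc ℂ) (p.map (conjAut : ℂ →+* ℂ)) /
        algebraMap (Polynomial ℂ) (RatFunc ℂ) (q.map (conjAut : ℂ →+* ℂ)) := by
  rw [HH, RatFunc.coe_mapRingHom_eq_coe_map, RatFunc.map_apply_div]
  rfl

lemma galR_eq (R : RatFunc ℂ) : galR conjAut R = HH R := by
  conv_rhs => rw [← RatFunc.num_div_denom R]
  rw [HH_div, galR]

lemma HH_C (c : ℂ) : HH (RatFunc.C c) = RatFunc.C (conjAut c) := by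
  have := HH_div (Polynomial.C c) 1
  simpa [RatFunc.algebraMap_C] using this

lemma HH_X : HH RatFunc.X = RatFunc.X := by
  have := HH_div Polynomial.X 1
  simpa [RatFunc.algebraMap_X] using this

lemma galR_fixed {S : RatFunc ℂ} (h : definedOver realSF S) : galR conjAut S = S := by
  obtain ⟨h1, h2⟩ := h
  have fix : ∀ p : Polynomial ℂ, (∀ n, p.coeff n ∈ realSF) → p.map (conjAut : ℂ →+* ℂ) = p := by
    intro p hp
    ext n
    rw [Polynomial.coeff_map]
    obtain ⟨r, hr⟩ := hp n
    rw [← hr]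
    exact Complex.conj_ofReal r
  rw [galR, fix _ h1, fix _ h2, RatFunc.num_div_denom]

lemma mapAut_apply (A : SL2 ℂ) (i j : Fin 2) :
    (SL2.mapAut conjAut A).1 i j = conjAut (A.1 i j) := rfl

lemma HH_moebius (A : SL2 ℂ) : HH (moebius A) = moebius (SL2.mapAut conjAut A) := by
  rw [moebius, moebius, map_div₀, map_add, map_add, map_mul, map_mul, HH_C, HH_C, HH_C, HH_C,
    HH_X, mapAut_apply, mapAut_apply, mapAut_apply, mapAut_apply]

lemma HH_mderiv (A : SL2 ℂ) : HH (mderiv A) = mderiv (SL2.mapAut conjAut A) := by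
  rw [mderiv, mderiv, map_inv₀, map_pow, map_add, map_mul, HH_C, HH_C, HH_X,
    mapAut_apply, mapAut_apply]

lemma HH_EA (A : SL2 ℂ) : HH.comp (EA A) = (EA (SL2.mapAut conjAut A)).comp HH :=
  ratfunc_hom_ext (fun c => by simp [EA_C, HH_C])
    (by simp [EA_X, HH_X, HH_moebius])

lemma galR_chi (k : ℤ) (A : SL2 ℂ) (S : RatFunc ℂ) :
    galR conjAut (chi k A S) = chi k (SL2.mapAut conjAut A) (galR conjAut S) := by
  rw [galR_eq, galR_eq, chi, chi, rcomp_eq, rcomp_eq, map_mul, map_zpow₀,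
    ← RingHom.comp_apply, HH_EA, RingHom.comp_apply, HH_mderiv]


/-- If `S = χ_k(T⁻¹)(R)` has real coefficients (so `R` is `χ_k`-definable over `ℝ`), then
the reflection `U = T⁻¹ ∘ J ∘ T` (with `J(z) = z̄`) is an anti-holomorphic automorphism of
`ω_R = R dz^k`: writing `U = A ∘ J` with `A = T⁻¹ ∘ T^τ`, one has
`R^τ(A^τ(z))·((A^τ)'(z))^k = R(z)`. -/
theorem stmt15 (k : ℤ) (R : RatFunc ℂ) (T : SL2 ℂ)
    (h : definedOver realSF (chi k T⁻¹ R)) :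
    chi k ((SL2.mapAut conjAut T)⁻¹ * T) (galR conjAut R) = R := by
  set σ := conjAut
  set M := SL2.mapAut σ T with hM
  set S := chi k T⁻¹ R with hS
  have hfix : galR σ S = S := galR_fixed h
  have hR : chi k T S = R := by
    rw [hS, chi_mul, inv_mul_cancel, chi_one]
  have hgR : galR σ R = chi k M S := by
    rw [← hR, galR_chi, hfix]
  rw [hgR, chi_mul, mul_inv_cancel_left, hR]
end
end

section
/- Let r > 1, θ ∈ ℝ with e^{2iθ} ∉ {−1, e^{−2iθ}}, and λ ∈ ℂ* with λ = −λ̄ e^{2iθ}. Set R(z) = (z−1)(z+r²)(z²−r²e^{2iθ})/(λ z³) and ω_R = R dz. Then for T(z) = −r²/z one has T*ω_R = ω_R^{τ} (τ = complex conjugation on coefficients), i.e., R^τ(z) = R(T(z))·T′(z). Consequently the χ_1-field of moduli of R is contained in ℝ. -/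
open Polynomial

noncomputable section

variable {L : Type*} [Field L]

lemma num_denom_of_eq {K : Type*} [Field K] {p q : K[X]} (hq : q.Monic)
    (hc : IsCoprime p q) {x : RatFunc K}
    (hx : x = algebraMap K[X] (RatFunc K) p / algebraMap K[X] (RatFunc K) q) :
    x.num = p ∧ x.denom = q := by
  have h : x.num * q = p * x.denom := (RatFunc.num_mul_eq_mul_denom_iff hq.ne_zero).mpr hx
  have hd : x.denom ∣ q := by
    refine (RatFunc.isCoprime_num_denom x).symm.dvd_of_dvd_mul_left ⟨p, ?_⟩
    rw [h]; ring
  have hq' : q ∣ x.denom := by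
    refine hc.symm.dvd_of_dvd_mul_left ⟨x.num, ?_⟩
    rw [← h]; ring
  have hdeq : x.denom = q :=
    Polynomial.eq_of_monic_of_associated (RatFunc.monic_denom x) hq (associated_of_dvd_dvd hd hq')
  refine ⟨mul_right_cancel₀ hq.ne_zero ?_, hdeq⟩
  rw [h, hdeq, mul_comm]

set_option maxHeartbeats 2000000 in
/-- For `r > 1`, `θ ∈ ℝ` with `e^{2iθ} ∉ {−1, e^{−2iθ}}`, and `λ ∈ ℂ*` with
`λ = −λ̄ e^{2iθ}`, the map `R(z) = (z−1)(z+r²)(z²−r²e^{2iθ})/(λ z³)` satisfies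
`R^τ = χ_1(T)(R)` for `T(z) = −r²/z` (i.e. `T*ω_R = ω_R^τ`); consequently the
`χ_1`-field of moduli of `R` is contained in `ℝ`. -/
theorem stmt17 (r θ : ℝ) (hr : 1 < r) (lam : ℂ) (hlam : lam ≠ 0)
    (h1 : Complex.exp (2 * θ * Complex.I) ≠ -1)
    (h2 : Complex.exp (2 * θ * Complex.I) ≠ Complex.exp (-(2 * θ) * Complex.I))
    (hl : lam = -(starRingEnd ℂ) lam * Complex.exp (2 * θ * Complex.I)) :
    ∀ R : RatFunc ℂ,
      R = (RatFunc.X - 1) * (RatFunc.X + RatFunc.C ((r : ℂ) ^ 2)) *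
            (RatFunc.X ^ 2 - RatFunc.C ((r : ℂ) ^ 2 * Complex.exp (2 * θ * Complex.I))) /
          (RatFunc.C lam * RatFunc.X ^ 3) →
      (∃ A : SL2 ℂ, moebius A = RatFunc.C (-(r : ℂ) ^ 2) / RatFunc.X ∧
        galR conjAut R = chi 1 A R) ∧
      {x : ℂ | ∀ σ : RingAut ℂ, (∃ A : SL2 ℂ, galR σ R = chi 1 A R) → σ x = x} ⊆
        Set.range (Complex.ofReal) := by
  intro R hR
  have hr0 : (r : ℂ) ≠ 0 := by
    simpa using (by positivity : (0:ℝ) < r).ne'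
  set E := Complex.exp (2 * θ * Complex.I) with hE
  have hE0 : E ≠ 0 := Complex.exp_ne_zero _
  set μ := (starRingEnd ℂ) lam with hμ
  have hμ0 : μ ≠ 0 := by simpa [hμ] using hlam
  have hA : ∃ A : SL2 ℂ, A.1 = !![0, -(r:ℂ); ((r:ℂ))⁻¹, 0] := by
    refine ⟨⟨_, ?_⟩, rfl⟩
    simp [Matrix.det_fin_two_of]
    field_simp
  obtain ⟨A, hAval⟩ := hA
  have hmoeb : moebius A = RatFunc.C (-(r : ℂ) ^ 2) / RatFunc.X := by
    rw [moebius, hAval]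
    simp only [Matrix.cons_val', Matrix.cons_val_zero, Matrix.cons_val_one, Matrix.head_cons,
      Matrix.empty_val', Matrix.cons_val_fin_one, Matrix.head_fin_const, Matrix.of_apply,
      Matrix.cons_val_fin_one]
    rw [map_zero, zero_mul, zero_add, add_zero]
    rw [div_eq_div_iff (by
      exact mul_ne_zero (by simpa using inv_ne_zero hr0) RatFunc.X_ne_zero) RatFunc.X_ne_zero]
    have h : (-(r:ℂ)^2) * ((r:ℂ))⁻¹ = -(r:ℂ) := by field_simp
    rw [← mul_assoc, ← map_mul, h]
  have hCinj : Function.Injective (RatFunc.C (K := ℂ)) := RatFunc.C_injective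
  have hCne : ∀ x : ℂ, x ≠ 0 → RatFunc.C x ≠ 0 := fun x hx =>
    (map_ne_zero_iff RatFunc.C hCinj).mpr hx
  set P : ℂ[X] := Polynomial.C lam⁻¹ *
      ((X - 1) * (X + Polynomial.C ((r:ℂ)^2)) * (X^2 - Polynomial.C ((r:ℂ)^2 * E))) with hP
  have hRalg : R = algebraMap ℂ[X] (RatFunc ℂ) P / algebraMap ℂ[X] (RatFunc ℂ) (X^3) := by
    rw [hR, hP]
    simp only [map_mul, map_sub, map_add, map_pow, map_one, RatFunc.algebraMap_C,
      RatFunc.algebraMap_X, map_inv₀]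
    rw [div_eq_div_iff (mul_ne_zero (hCne lam hlam) (pow_ne_zero _ RatFunc.X_ne_zero))
      (pow_ne_zero _ RatFunc.X_ne_zero)]
    field_simp [hCne lam hlam]
  have hcop : IsCoprime P ((X:ℂ[X])^3) := by
    have hX : IsCoprime (Polynomial.X : ℂ[X]) P := by
      refine (Polynomial.prime_X.coprime_iff_not_dvd).mpr ?_
      rw [Polynomial.X_dvd_iff, Polynomial.coeff_zero_eq_eval_zero]
      have heval : Polynomial.eval 0 P = lam⁻¹ * ((r:ℂ)^2 * ((r:ℂ)^2 * E)) := by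
        simp [hP]
        try ring
      rw [heval]
      exact mul_ne_zero (inv_ne_zero hlam) (mul_ne_zero (pow_ne_zero _ hr0)
        (mul_ne_zero (pow_ne_zero _ hr0) hE0))
    exact hX.symm.pow_right
  obtain ⟨hnum, hden⟩ := num_denom_of_eq (Polynomial.monic_X_pow 3) hcop hRalg
  have h2c : (starRingEnd ℂ) (2 * (θ:ℂ) * Complex.I) = -(2 * (θ:ℂ) * Complex.I) := by
    simp [Complex.conj_ofReal, map_ofNat]
  have hconjE : (starRingEnd ℂ) E = E⁻¹ := by
    rw [hE, ← Complex.exp_conj, h2c, Complex.exp_neg]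
  have hcoe : (conjAut : ℂ →+* ℂ) = starRingEnd ℂ := rfl
  have hgal : galR conjAut R =
      algebraMap ℂ[X] (RatFunc ℂ) (Polynomial.C μ⁻¹ *
        ((X - 1) * (X + Polynomial.C ((r:ℂ)^2)) * (X^2 - Polynomial.C ((r:ℂ)^2 * E⁻¹)))) /
      algebraMap ℂ[X] (RatFunc ℂ) (X^3) := by
    rw [galR, hnum, hden, hP, hcoe]
    simp only [Polynomial.map_mul, Polynomial.map_sub, Polynomial.map_add, Polynomial.map_pow,
      Polynomial.map_one, Polynomial.map_X, Polynomial.map_C, map_inv₀, hconjE, map_mul,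
      Complex.conj_ofReal, map_pow, hμ]
  have key : galR conjAut R = chi 1 A R := by
    rw [hgal, chi, zpow_one, rcomp, RatFunc.eval, hnum, hden, hmoeb, mderiv, hAval]
    simp only [Matrix.cons_val', Matrix.cons_val_zero, Matrix.cons_val_one, Matrix.head_cons,
      Matrix.empty_val', Matrix.cons_val_fin_one, Matrix.head_fin_const, Matrix.of_apply,
      Matrix.cons_val_fin_one, map_zero, add_zero]
    rw [hP]
    simp only [Polynomial.eval₂_mul, Polynomial.eval₂_sub, Polynomial.eval₂_add,
      Polynomial.eval₂_pow, Polynomial.eval₂_X, Polynomial.eval₂_C, Polynomial.eval₂_one]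
    simp only [map_mul, map_sub, map_add, map_pow, map_one, RatFunc.algebraMap_C,
      RatFunc.algebraMap_X, map_inv₀]
    rw [hl]
    simp only [map_mul, map_neg, map_inv₀]
    have hXne := RatFunc.X_ne_zero (K := ℂ)
    simp only [map_pow]
    have hc : RatFunc.C (r:ℂ) ≠ 0 := hCne _ hr0
    have he : RatFunc.C E ≠ 0 := hCne _ hE0
    have hm : RatFunc.C μ ≠ 0 := hCne _ hμ0
    have h1 : (-RatFunc.C (r:ℂ)^2/RatFunc.X : RatFunc ℂ) ≠ 0 :=
      div_ne_zero (by simpa using pow_ne_zero 2 hc) hXne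
    field_simp [h1]
    ring
  refine ⟨⟨A, hmoeb, key⟩, ?_⟩
  intro x hx
  have hcx : conjAut x = x := hx conjAut ⟨A, key⟩
  have : (starRingEnd ℂ) x = x := hcx
  exact ⟨x.re, Complex.conj_eq_iff_re.mp this⟩
end
end
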